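/- arXiv:2412.00003 — 11 statements merged into one kernel-verified Lean document; each statement's English description precedes it below -/
import Mathlib

section
/- Let A be an n×n real matrix all of whose diagonal entries are nonzero, satisfying the inverse cyclic property. Then det(A) = (d - c)^{n-1} / d^{n-2}, where d = a_{11}a_{22}⋯a_{nn} is the product of the diagonal entries and c = a_{12}a_{23}⋯a_{(n-1)n}a_{n1} is the cyclic product. -/
open Matrix Finset

/-- A matrix (of order ≥ 2) has the *inverse cyclic property* if all its diagonal
entries are nonzero and the three cyclic entry conditions hold. -/
def InvCyclic {n : ℕ} (A : Matrix (Fin (n + 2)) (Fin (n + 2)) ℝ) : Prop :=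
  (∀ i, A i i ≠ 0) ∧
  (∀ i k j : Fin (n + 2), i < k → k < j → A i j = A i k * A k j / A k k) ∧
  (∀ i j : Fin (n + 2), j < i → i ≠ Fin.last (n + 1) →
    A i j = A i (Fin.last (n + 1)) * A (Fin.last (n + 1)) j /
      A (Fin.last (n + 1)) (Fin.last (n + 1))) ∧
  (∀ j : Fin (n + 2), j < Fin.last (n + 1) →
    A (Fin.last (n + 1)) j = A (Fin.last (n + 1)) 0 * A 0 j / A 0 0)

/-- `d`, the product of the diagonal entries. -/
def diagProd {n : ℕ} (A : Matrix (Fin (n + 2)) (Fin (n + 2)) ℝ) : ℝ := ∏ i, A i i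

/-- `c`, the cyclic product `a₁₂a₂₃⋯a_{(n-1)n}a_{n1}`. -/
def cycProd {n : ℕ} (A : Matrix (Fin (n + 2)) (Fin (n + 2)) ℝ) : ℝ :=
  ∏ i : Fin (n + 2), A i (i + 1)

/-! Put `r i = a_{i,i+1} / a_{i+1,i+1}`, indices taken mod `n`. The inverse cyclic conditions amount
to `a_{ij} = r_i a_{i+1,j}` for all `j ≠ i`. Subtracting `r_i` times row `i+1` from row `i` for every
`i < n` thus leaves a lower triangular matrix, and going once around the cycle gives
`r_i a_{i+1,i} = (∏ r) a_{ii} = (c/d) a_{ii}`, so its diagonal is `(1 - c/d) a_{ii}` for `i < n` and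
`a_{nn}`. Hence `det A = (1 - c/d)^{n-1} d`. -/

namespace Matrix

variable {R : Type*} [CommRing R] {n : ℕ}

theorem det_eq_prod_of_apply_castSucc_eq_mul_apply_succ
    (A : Matrix (Fin (n + 1)) (Fin (n + 1)) R) (r : Fin n → R)
    (hA : ∀ i j, j ≠ i.castSucc → A i.castSucc j = r i * A i.succ j) :
    A.det = (∏ i : Fin n, (A i.castSucc i.castSucc - r i * A i.succ i.castSucc)) *
      A (Fin.last n) (Fin.last n) := by
  set N : Matrix (Fin (n + 1)) (Fin (n + 1)) R := ∑ i : Fin n, single i.castSucc i.succ (r i)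
    with hN_def
  have hN : ∀ i j, j ≤ i → N i j = 0 := fun i j hji => by
    rw [hN_def, Matrix.sum_apply]
    refine Finset.sum_eq_zero fun k _ => single_apply_of_ne _ _ _ _ _ ?_
    rintro ⟨rfl, rfl⟩
    exact (Fin.castSucc_lt_succ (i := k)).not_ge hji
  have hNA : ∀ i j, (N * A) i.castSucc j = r i * A i.succ j := fun i j => by
    rw [hN_def, Finset.sum_mul, Matrix.sum_apply, Finset.sum_eq_single i, single_mul_apply_same]
    · exact fun k _ hki => single_mul_apply_of_ne _ _ _ _ _ (Fin.castSucc_injective _ |>.ne hki.symm) _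
    · simp
  have hNA_last : ∀ j, (N * A) (Fin.last n) j = 0 := fun j => by
    rw [hN_def, Finset.sum_mul, Matrix.sum_apply]
    exact Finset.sum_eq_zero fun k _ =>
      single_mul_apply_of_ne _ _ _ _ _ (Fin.castSucc_lt_last k).ne' _
  have hdet : ((1 - N) * A).det = A.det := by
    have hupper : (1 - N).IsUpperTriangular := fun i j (hji : j < i) => by
      simp [hji.ne', hN i j hji.le]
    rw [det_mul, det_of_isUpperTriangular hupper]
    simp [hN]
  have hlower : ((1 - N) * A).IsLowerTriangular := fun i j (hij : i < j) => by
    induction i using Fin.lastCases with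
    | last => exact absurd hij (Fin.le_last _).not_gt
    | cast i => simp [sub_mul, hNA, hA i j hij.ne']
  rw [← hdet, det_of_isLowerTriangular _ hlower, Fin.prod_univ_castSucc]
  simp only [sub_mul, one_mul, sub_apply, hNA, hNA_last, sub_zero]

section Cyclic

open Fin.NatCast

variable (A : Matrix (Fin (n + 1)) (Fin (n + 1)) R) (r : Fin (n + 1) → R)

theorem apply_eq_prod_mul_apply_add (hA : ∀ i j, j ≠ i → A i j = r i * A (i + 1) j)
    (i j : Fin (n + 1)) (m : ℕ) (hm : ∀ k < m, i + k ≠ j) :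
    A i j = (∏ k ∈ range m, r (i + k)) * A (i + m) j := by
  induction m with
  | zero => simp
  | succ m ih =>
    rw [ih fun k hk => hm k (by omega), hA _ _ (hm m m.lt_succ_self).symm, prod_range_succ,
      Nat.cast_succ, add_assoc, mul_assoc]

theorem mul_apply_add_one_self (hA : ∀ i j, j ≠ i → A i j = r i * A (i + 1) j) (i : Fin (n + 1)) :
    r i * A (i + 1) i = (∏ k, r k) * A i i := by
  have hne : ∀ k < n, i + 1 + k ≠ i := fun k hk h => by
    have : ((k + 1 : ℕ) : Fin (n + 1)) = 0 := by
      simpa [Nat.cast_succ, add_assoc, add_comm (1 : Fin (n + 1))] using h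
    rw [Fin.natCast_eq_zero] at this
    exact absurd (Nat.le_of_dvd k.succ_pos this) (by omega)
  have hround : i + 1 + n = i := by
    rw [add_assoc, add_comm (1 : Fin (n + 1)), ← Nat.cast_succ, Fin.natCast_self, add_zero]
  have hcycle : ∏ k ∈ range (n + 1), r (i + k) = ∏ k, r k := by
    rw [← Fin.prod_univ_eq_prod_range]
    simp only [Fin.cast_val_eq_self]
    exact Equiv.prod_comp (Equiv.addLeft i) r
  rw [apply_eq_prod_mul_apply_add A r hA _ _ n hne, hround, ← mul_assoc, ← hcycle,
    prod_range_succ' _ n]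
  simp only [Nat.cast_zero, add_zero, Nat.cast_succ, add_assoc, add_comm (1 : Fin (n + 1))]
  ring

theorem det_eq_one_sub_prod_pow_mul_prod_diag (hA : ∀ i j, j ≠ i → A i j = r i * A (i + 1) j) :
    A.det = (1 - ∏ i, r i) ^ n * ∏ i, A i i := by
  have hrow : ∀ (i : Fin n) j, j ≠ i.castSucc → A i.castSucc j = r i.castSucc * A i.succ j :=
    fun i j hj => by rw [hA _ _ hj, Fin.coeSucc_eq_succ]
  have hpivot : ∀ i : Fin n, A i.castSucc i.castSucc - r i.castSucc * A i.succ i.castSucc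
      = (1 - ∏ k, r k) * A i.castSucc i.castSucc := fun i => by
    rw [← Fin.coeSucc_eq_succ, mul_apply_add_one_self A r hA]
    ring
  rw [det_eq_prod_of_apply_castSucc_eq_mul_apply_succ A _ hrow, prod_congr rfl fun i _ => hpivot i,
    prod_mul_distrib, prod_const, card_univ, Fintype.card_fin, Fin.prod_univ_castSucc (fun i => A i i),
    mul_assoc]

end Cyclic

end Matrix

theorem InvCyclic.apply_eq_div_mul {n : ℕ} {A : Matrix (Fin (n + 2)) (Fin (n + 2)) ℝ}
    (hA : InvCyclic A) {i j : Fin (n + 2)} (hji : j ≠ i) :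
    A i j = A i (i + 1) / A (i + 1) (i + 1) * A (i + 1) j := by
  obtain ⟨hdiag, hup, hlow, hlast⟩ := hA
  induction i using Fin.lastCases with
  | last =>
    rw [Fin.last_add_one, hlast j (lt_of_le_of_ne (Fin.le_last j) hji)]
    ring
  | cast i =>
    rw [Fin.coeSucc_eq_succ]
    rcases lt_or_gt_of_ne hji with hji | hij
    · rw [hlow _ _ hji (Fin.castSucc_lt_last i).ne]
      induction i using Fin.lastCases with
      | last => rw [Fin.succ_last]; ring
      | cast i =>
        have hsucc : i.castSucc.succ ≠ Fin.last (n + 1) := by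
          rw [Fin.succ_castSucc]; exact (Fin.castSucc_lt_last _).ne
        rw [hlow _ _ (hji.trans Fin.castSucc_lt_succ) hsucc,
          hup _ i.castSucc.succ _ Fin.castSucc_lt_succ (lt_of_le_of_ne (Fin.le_last _) hsucc)]
        field_simp [hdiag]
    · rcases (Fin.castSucc_lt_iff_succ_le.mp hij).eq_or_lt with rfl | h
      · field_simp [hdiag]
      · rw [hup _ _ _ Fin.castSucc_lt_succ h]
        ring

theorem stmt0 {n : ℕ} (A : Matrix (Fin (n + 2)) (Fin (n + 2)) ℝ) (hA : InvCyclic A) :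
    A.det = (diagProd A - cycProd A) ^ (n + 1) / (diagProd A) ^ n := by
  have hd : diagProd A ≠ 0 := prod_ne_zero_iff.mpr fun i _ => hA.1 i
  have hprod : ∏ i, A i (i + 1) / A (i + 1) (i + 1) = cycProd A / diagProd A := by
    rw [prod_div_distrib, cycProd, diagProd]
    exact congrArg _ (Equiv.prod_comp (Equiv.addRight 1) fun i => A i i)
  rw [det_eq_one_sub_prod_pow_mul_prod_diag A _ fun i j h => hA.apply_eq_div_mul h, hprod,
    ← diagProd, one_sub_div hd, div_pow]
  field_simp
  ring
end

section
/- An inverse cyclic matrix A is nonsingular if and only if d ≠ c, where d is the product of the diagonal entries and c is the cyclic product. -/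
open Matrix Finset

/-!
The defining relations make any two cyclically adjacent columns `k`, `k + 1` of an inverse cyclic
matrix proportional away from row `k + 1`, while in row `k + 1` one has
`a_{k+1,k} a_{k,k+1} d = c a_{kk} a_{k+1,k+1}`, which comes from a telescoping product along the
first row. Consequently `A * B = (1 - c / d) • 1` for the cyclic bidiagonal matrix `B` with
`B_{jj} = 1 / a_{jj}` and `B_{j-1,j} = -a_{j-1,j} / (a_{j-1,j-1} a_{jj})`. Since `B ≠ 0`, `A` is
singular exactly when `c = d`.
-/

theorem Fin.apply_last_mul_prod_eq_apply_zero_mul_prod {M : Type*} [CommMonoid M] :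
    ∀ {m : ℕ} (f : Fin (m + 1) → M) (g h : Fin m → M),
      (∀ i, f i.succ * g i = f i.castSucc * h i) → f (Fin.last m) * ∏ i, g i = f 0 * ∏ i, h i
  | 0, _, _, _, _ => by simp [Fin.last_zero]
  | m + 1, f, g, h, hfgh => by
    have ih := apply_last_mul_prod_eq_apply_zero_mul_prod (fun i => f i.castSucc)
      (fun i => g i.castSucc) (fun i => h i.castSucc) fun i => hfgh i.castSucc
    simp only [Fin.castSucc_zero] at ih
    calc f (Fin.last (m + 1)) * ∏ i, g i
        = f (Fin.last m).succ * g (Fin.last m) * ∏ i : Fin m, g i.castSucc := by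
          rw [Fin.prod_univ_castSucc, Fin.succ_last, mul_comm (∏ i : Fin m, _), mul_assoc]
      _ = f (Fin.last m).castSucc * (∏ i : Fin m, g i.castSucc) * h (Fin.last m) := by
          rw [hfgh, mul_right_comm]
      _ = f 0 * ∏ i, h i := by
          rw [ih, Fin.prod_univ_castSucc h, mul_assoc]

theorem Matrix.det_ne_zero_iff_of_mul_eq_smul_one {ι K : Type*} [Fintype ι] [DecidableEq ι]
    [Field K] {A B : Matrix ι ι K} {r : K} (hB : B ≠ 0) (hAB : A * B = r • 1) :
    A.det ≠ 0 ↔ r ≠ 0 := by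
  constructor
  · rintro hA rfl
    rw [zero_smul] at hAB
    apply hB
    rw [← nonsing_inv_mul_cancel_left A B (isUnit_iff_ne_zero.mpr hA), hAB, Matrix.mul_zero]
  · intro hr hA
    have := congrArg det hAB
    rw [det_mul, hA, zero_mul, det_smul, det_one, mul_one] at this
    exact pow_ne_zero _ hr this.symm

-- `j - 1` wraps around in `Fin (n + 2)`: column `0` has its second entry in row `n + 1`.
noncomputable def cyclicBidiagonal {n : ℕ} (A : Matrix (Fin (n + 2)) (Fin (n + 2)) ℝ) :
    Matrix (Fin (n + 2)) (Fin (n + 2)) ℝ := fun k j =>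
  (if k = j then (A j j)⁻¹ else 0) - (if k = j - 1 then A k j / (A k k * A j j) else 0)

theorem mul_cyclicBidiagonal_apply {n : ℕ} (A : Matrix (Fin (n + 2)) (Fin (n + 2)) ℝ)
    (i j : Fin (n + 2)) :
    (A * cyclicBidiagonal A) i j =
      A i j * (A j j)⁻¹ - A i (j - 1) * (A (j - 1) j / (A (j - 1) (j - 1) * A j j)) := by
  simp only [mul_apply, cyclicBidiagonal, mul_sub, mul_ite, mul_zero, sum_sub_distrib,
    sum_ite_eq', mem_univ, if_true]

namespace InvCyclic

variable {n : ℕ} {A : Matrix (Fin (n + 2)) (Fin (n + 2)) ℝ}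

local notation "N" => Fin.last (n + 1)

theorem diagProd_ne_zero (hA : InvCyclic A) : diagProd A ≠ 0 :=
  prod_ne_zero_iff.mpr fun i _ => hA.1 i

theorem cyclicBidiagonal_ne_zero (hA : InvCyclic A) : cyclicBidiagonal A ≠ 0 := by
  intro h
  have h00 := congrFun (congrFun h 0) 0
  simp only [cyclicBidiagonal, zero_sub, if_true, Matrix.zero_apply] at h00
  rw [if_neg (by simp), sub_zero] at h00
  exact inv_ne_zero (hA.1 0) h00

theorem mul_diag_of_le_of_lt (hA : InvCyclic A) {i k j : Fin (n + 2)} (hik : i ≤ k)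
    (hkj : k < j) : A i j * A k k = A i k * A k j := by
  rcases hik.lt_or_eq with hik | rfl
  · rw [hA.2.1 i k j hik hkj, div_mul_cancel₀ _ (hA.1 k)]
  · ring

theorem mul_diag_last_of_lt (hA : InvCyclic A) {i j : Fin (n + 2)} (hji : j < i) (hi : i ≠ N) :
    A i j * A N N = A i N * A N j := by
  rw [hA.2.2.1 i j hji hi, div_mul_cancel₀ _ (hA.1 N)]

theorem last_mul_diag_zero (hA : InvCyclic A) {j : Fin (n + 2)} (hj : j < N) :
    A N j * A 0 0 = A N 0 * A 0 j := by
  rw [hA.2.2.2 j hj, div_mul_cancel₀ _ (hA.1 0)]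

theorem last_succ_mul_diag (hA : InvCyclic A) {k : Fin (n + 1)} (hk : k.succ < N) :
    A N k.succ * A k.castSucc k.castSucc = A N k.castSucc * A k.castSucc k.succ := by
  have e1 := hA.last_mul_diag_zero hk
  have e2 := hA.last_mul_diag_zero (k.castSucc_lt_succ.trans hk)
  have e3 := hA.mul_diag_of_le_of_lt (Fin.zero_le k.castSucc) k.castSucc_lt_succ
  apply mul_left_cancel₀ (hA.1 0)
  linear_combination A k.castSucc k.castSucc * e1 - A k.castSucc k.succ * e2 + A N 0 * e3

theorem succ_mul_diag (hA : InvCyclic A) {i : Fin (n + 2)} {k : Fin (n + 1)} (hi : i ≠ k.succ) :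
    A i k.succ * A k.castSucc k.castSucc = A i k.castSucc * A k.castSucc k.succ := by
  rcases le_or_gt i k.castSucc with hik | hki
  · exact hA.mul_diag_of_le_of_lt hik k.castSucc_lt_succ
  have hki : k.succ < i := lt_of_le_of_ne (Fin.castSucc_lt_iff_succ_le.mp hki) hi.symm
  rcases eq_or_ne i N with rfl | hiN
  · exact hA.last_succ_mul_diag hki
  have hW := hA.last_succ_mul_diag (hki.trans (lt_of_le_of_ne (Fin.le_last i) hiN))
  have e1 := hA.mul_diag_last_of_lt hki hiN
  have e2 := hA.mul_diag_last_of_lt (k.castSucc_lt_succ.trans hki) hiN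
  apply mul_left_cancel₀ (hA.1 N)
  linear_combination A k.castSucc k.castSucc * e1 - A k.castSucc k.succ * e2 + A i N * hW

theorem col_add_one_mul_diag (hA : InvCyclic A) {i k : Fin (n + 2)} (hi : i ≠ k + 1) :
    A i (k + 1) * A k k = A i k * A k (k + 1) := by
  induction k using Fin.lastCases with
  | last =>
    rw [Fin.last_add_one] at hi ⊢
    rcases eq_or_ne i N with rfl | hiN
    · ring
    · exact hA.mul_diag_last_of_lt (Fin.pos_of_ne_zero hi) hiN
  | cast k =>
    rw [Fin.coeSucc_eq_succ] at hi ⊢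
    exact hA.succ_mul_diag hi

theorem last_mul_zero_mul_diagProd (hA : InvCyclic A) :
    A N 0 * A 0 N * diagProd A = cycProd A * A 0 0 * A N N := by
  have htel := Fin.apply_last_mul_prod_eq_apply_zero_mul_prod (fun j => A 0 j)
    (fun i => A i.castSucc i.castSucc) (fun i => A i.castSucc i.succ)
    fun i => hA.mul_diag_of_le_of_lt (Fin.zero_le _) i.castSucc_lt_succ
  have hc : cycProd A = (∏ i : Fin (n + 1), A i.castSucc i.succ) * A N 0 := by
    simp only [cycProd, Fin.prod_univ_castSucc, Fin.coeSucc_eq_succ, Fin.last_add_one]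
  rw [diagProd, Fin.prod_univ_castSucc, hc]
  linear_combination A N 0 * A N N * htel

theorem last_mul_mul_diagProd (hA : InvCyclic A) {j : Fin (n + 2)} (hj : j < N) :
    A N j * A j N * diagProd A = cycProd A * A j j * A N N := by
  have e1 := hA.last_mul_diag_zero hj
  have e2 := hA.mul_diag_of_le_of_lt (Fin.zero_le j) hj
  apply mul_left_cancel₀ (hA.1 0)
  linear_combination (A j N * diagProd A) * e1 - (A N 0 * diagProd A) * e2 +
    A j j * hA.last_mul_zero_mul_diagProd

theorem add_one_mul_mul_diagProd (hA : InvCyclic A) (k : Fin (n + 2)) :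
    A (k + 1) k * A k (k + 1) * diagProd A = cycProd A * A k k * A (k + 1) (k + 1) := by
  induction k using Fin.lastCases with
  | last =>
    rw [Fin.last_add_one]
    linear_combination hA.last_mul_zero_mul_diagProd
  | cast k =>
    rw [Fin.coeSucc_eq_succ]
    rcases eq_or_ne k.succ N with hk | hk
    · rw [hk]
      linear_combination hA.last_mul_mul_diagProd (hk ▸ k.castSucc_lt_succ)
    · have hkN : k.succ < N := lt_of_le_of_ne (Fin.le_last _) hk
      have e1 := hA.mul_diag_last_of_lt k.castSucc_lt_succ hk
      have e2 := hA.last_succ_mul_diag hkN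
      apply mul_left_cancel₀ (hA.1 N)
      linear_combination (A k.castSucc k.succ * diagProd A) * e1 +
        -(A k.succ N * diagProd A) * e2 +
        A k.castSucc k.castSucc * hA.last_mul_mul_diagProd hkN

theorem mul_cyclicBidiagonal (hA : InvCyclic A) :
    A * cyclicBidiagonal A = (1 - cycProd A / diagProd A) • 1 := by
  ext i j
  obtain ⟨k, rfl⟩ : ∃ k, j = k + 1 := ⟨j - 1, (sub_add_cancel j 1).symm⟩
  have hk := hA.1 k
  have hk1 := hA.1 (k + 1)
  have hd := hA.diagProd_ne_zero
  rw [mul_cyclicBidiagonal_apply, add_sub_cancel_right, Matrix.smul_apply, one_apply, smul_eq_mul]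
  rcases eq_or_ne i (k + 1) with rfl | hi
  · rw [if_pos rfl]
    field_simp
    linear_combination -hA.add_one_mul_mul_diagProd k
  · rw [if_neg hi, mul_zero]
    field_simp
    linear_combination hA.col_add_one_mul_diag hi

end InvCyclic

theorem stmt1 {n : ℕ} (A : Matrix (Fin (n + 2)) (Fin (n + 2)) ℝ) (hA : InvCyclic A) :
    A.det ≠ 0 ↔ diagProd A ≠ cycProd A := by
  rw [det_ne_zero_iff_of_mul_eq_smul_one hA.cyclicBidiagonal_ne_zero hA.mul_cyclicBidiagonal,
    sub_ne_zero, ne_comm, Ne, div_eq_one_iff_eq hA.diagProd_ne_zero]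
  exact ne_comm
end

section
/- Let A ∈ M_n(ℝ) be a nonsingular full matrix with the inverse cyclic property, and set d := ∏_i a_{ii}, c := a_{12}a_{23}⋯a_{(n-1)n}a_{n1}. Then A^{-1} = B where b_{i,i+1} = -a_{i,i+1}(∏_{k≠i,i+1} a_{kk})/(d-c), b_{n1} = -a_{n1}(∏_{k=2}^{n-1} a_{kk})/(d-c), b_{ii} = (∏_{k≠i} a_{kk})/(d-c), and all other entries of B are zero. -/
/-!
The inverse cyclic relations force `a_ij = u_i v_j` on and above the diagonal and
`a_ij = t u_i v_j` below it, with `u_i = a_{in}`, `v_j = a_{1j} / a_{1n}` and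
`t = a_{n1} a_{1n} / (a_{nn} a_{11})`. For such a matrix, outside row `j` the column `j` is
proportional to column `j - 1` (indices mod `n`) and `a_{j-1,j} a_{j,j-1} = t a_{j-1,j-1} a_{jj}`.
These two facts say exactly that the bidiagonal-plus-corner matrix `C` with
`c_jj = ∏_{k ≠ j} a_kk` and `c_{j-1,j} = -a_{j-1,j} ∏_{k ≠ j-1, j} a_kk` satisfies
`A C = (1 - t) d I`. Since also `c = t d`, this gives `A⁻¹ = C / (d - c)`.
-/

open Matrix Finset

/-- A *bi-diagonal south-west* (bdsw) matrix: the diagonal, the super diagonal and the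
south-west corner entry are nonzero, and all other entries are zero. -/
def Bdsw {n : ℕ} (B : Matrix (Fin (n + 2)) (Fin (n + 2)) ℝ) : Prop :=
  (∀ i, B i i ≠ 0) ∧
  (∀ i j : Fin (n + 2), (j : ℕ) = (i : ℕ) + 1 → B i j ≠ 0) ∧
  (B (Fin.last (n + 1)) 0 ≠ 0) ∧
  (∀ i j : Fin (n + 2), i ≠ j → (j : ℕ) ≠ (i : ℕ) + 1 →
    ¬(i = Fin.last (n + 1) ∧ j = 0) → B i j = 0)


section ProdCompl

variable {ι M : Type*} [Fintype ι] [DecidableEq ι] [CommMonoid M]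

lemma prod_univ_sdiff_singleton_eq_mul {i j : ι} (h : i ≠ j) (f : ι → M) :
    ∏ k ∈ univ \ {j}, f k = f i * ∏ k ∈ univ \ {i, j}, f k := by
  rw [← mul_prod_erase _ f (by simp [h] : i ∈ univ \ {j})]
  congr 2
  ext k
  simp

lemma prod_univ_eq_mul_prod_sdiff_pair {i j : ι} (h : i ≠ j) (f : ι → M) :
    ∏ k, f k = f i * f j * ∏ k ∈ univ \ {i, j}, f k := by
  rw [← prod_sdiff (subset_univ {i, j}), prod_pair h, mul_comm]

end ProdCompl

section CyclicAdjugate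

variable {R : Type*} [CommRing R] {n : ℕ}

/-- Indices are read cyclically: `i + 1` and `j - 1` wrap around in `Fin (n + 2)`. -/
def cyclicAdjugate (A : Matrix (Fin (n + 2)) (Fin (n + 2)) R) :
    Matrix (Fin (n + 2)) (Fin (n + 2)) R :=
  of fun i j =>
    if j = i + 1 then -A i j * ∏ k ∈ univ \ {i, j}, A k k
    else if i = j then ∏ k ∈ univ \ {i}, A k k
    else 0

theorem mul_cyclicAdjugate (A : Matrix (Fin (n + 2)) (Fin (n + 2)) R) (t : R)
    (hcol : ∀ i j, i ≠ j → A i j * A (j - 1) (j - 1) = A i (j - 1) * A (j - 1) j)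
    (hpair : ∀ j, A (j - 1) j * A j (j - 1) = t * (A (j - 1) (j - 1) * A j j)) :
    A * cyclicAdjugate A = ((1 - t) * ∏ k, A k k) • 1 := by
  ext i j
  have hne : j - 1 ≠ j := by simp
  set P := ∏ k ∈ univ \ {j - 1, j}, A k k
  have hpred : cyclicAdjugate A (j - 1) j = -A (j - 1) j * P := by simp [cyclicAdjugate, P]
  have hdiag : cyclicAdjugate A j j = A (j - 1) (j - 1) * P := by
    simp [cyclicAdjugate, P, prod_univ_sdiff_singleton_eq_mul hne]
  have hzero : ∀ k, k ≠ j - 1 ∧ k ≠ j → A i k * cyclicAdjugate A k j = 0 := by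
    rintro k ⟨hk₁, hk⟩
    have : j ≠ k + 1 := fun h => hk₁ (by rw [h, add_sub_cancel_right])
    simp [cyclicAdjugate, this, hk]
  rw [mul_apply, Fintype.sum_eq_add _ _ hne hzero, hpred, hdiag, Matrix.smul_apply, one_apply,
    prod_univ_eq_mul_prod_sdiff_pair hne]
  split_ifs with hij
  · subst hij
    linear_combination (-P) * hpair i
  · linear_combination P * hcol i j hij

end CyclicAdjugate

section CyclicFactor

variable {R : Type*} [CommRing R] {m n : ℕ}

def cyclicFactor (u v : Fin m → R) (t : R) : Matrix (Fin m) (Fin m) R :=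
  of fun i j => u i * v j * if j < i then t else 1

variable (u v : Fin (n + 2) → R) (t : R)

lemma cyclicFactor_mul_diag_pred {i j : Fin (n + 2)} (hij : i ≠ j) :
    cyclicFactor u v t i j * cyclicFactor u v t (j - 1) (j - 1)
      = cyclicFactor u v t i (j - 1) * cyclicFactor u v t (j - 1) j := by
  have hweight : (if j < i then t else 1)
      = (if j - 1 < i then t else 1) * (if j < j - 1 then t else 1) := by
    rcases eq_or_ne j 0 with rfl | hj
    · have hlast : (0 : Fin (n + 2)) - 1 = Fin.last (n + 1) := by
        rw [Fin.ext_iff, Fin.coe_sub_one, if_pos rfl, Fin.val_last]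
      simp [hlast, Fin.pos_iff_ne_zero.2 hij, (Fin.le_last i).not_gt]
    · have hlt : j - 1 < j := Fin.sub_one_lt_iff.2 (Fin.pos_iff_ne_zero.2 hj)
      have hiff : j < i ↔ j - 1 < i := by
        rw [Fin.lt_def, Fin.lt_def, Fin.coe_sub_one, if_neg hj]
        have : (i : ℕ) ≠ j := Fin.val_ne_of_ne hij
        omega
      simp [hiff, hlt.not_gt]
  simp only [cyclicFactor, of_apply, hweight, lt_irrefl, if_false]
  ring

lemma cyclicFactor_pred_mul_pred (j : Fin (n + 2)) :
    cyclicFactor u v t (j - 1) j * cyclicFactor u v t j (j - 1)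
      = t * (cyclicFactor u v t (j - 1) (j - 1) * cyclicFactor u v t j j) := by
  have hne : j - 1 ≠ j := by simp
  simp only [cyclicFactor, of_apply, lt_irrefl, if_false]
  rcases hne.lt_or_gt with h | h <;> simp only [h, h.not_gt, if_true, if_false] <;> ring

lemma prod_cyclicFactor_add_one :
    ∏ i, cyclicFactor u v t i (i + 1) = t * ∏ i, cyclicFactor u v t i i := by
  simp only [cyclicFactor, of_apply, lt_irrefl, if_false, mul_one, Fin.add_one_lt_iff,
    prod_mul_distrib, Fintype.prod_ite_eq']
  rw [Fintype.prod_equiv (Equiv.addRight 1) (fun i => v (i + 1)) v fun _ => rfl]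
  ring

end CyclicFactor

section InvCyclic

variable {n : ℕ} {A : Matrix (Fin (n + 2)) (Fin (n + 2)) ℝ}

lemma InvCyclic.apply_mul_apply_zero_last_of_le (hic : InvCyclic A) {i j : Fin (n + 2)}
    (hij : i ≤ j) :
    A i j * A 0 (Fin.last (n + 1)) = A i (Fin.last (n + 1)) * A 0 j := by
  obtain ⟨hdiag, hupper, -, -⟩ := hic
  rcases eq_or_ne i 0 with rfl | hi
  · ring
  rcases eq_or_ne j (Fin.last (n + 1)) with rfl | hj
  · ring
  have hi₀ : 0 < i := Fin.pos_iff_ne_zero.2 hi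
  have hjL : j < Fin.last (n + 1) := lt_of_le_of_ne (Fin.le_last j) hj
  rw [hupper 0 i _ hi₀ (hij.trans_lt hjL)]
  rcases hij.eq_or_lt with rfl | hlt
  · field_simp [hdiag i]
  · rw [hupper 0 i j hi₀ hlt]
    field_simp [hdiag i]

lemma InvCyclic.apply_mul_diag_of_lt (hic : InvCyclic A) {i j : Fin (n + 2)} (hji : j < i) :
    A i j * (A (Fin.last (n + 1)) (Fin.last (n + 1)) * A 0 0)
      = A i (Fin.last (n + 1)) * A (Fin.last (n + 1)) 0 * A 0 j := by
  obtain ⟨hdiag, -, hlower, hlast⟩ := hic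
  rcases eq_or_ne i (Fin.last (n + 1)) with rfl | hi
  · rw [hlast j hji]
    field_simp [hdiag 0]
  · rw [hlower i j hji hi, hlast j (hji.trans_le (Fin.le_last i))]
    field_simp [hdiag 0, hdiag (Fin.last (n + 1))]

lemma InvCyclic.exists_eq_cyclicFactor (hic : InvCyclic A) (h : A 0 (Fin.last (n + 1)) ≠ 0) :
    ∃ u v t, A = cyclicFactor u v t := by
  refine ⟨fun i => A i (Fin.last (n + 1)), fun j => A 0 j / A 0 (Fin.last (n + 1)),
    A (Fin.last (n + 1)) 0 * A 0 (Fin.last (n + 1))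
      / (A (Fin.last (n + 1)) (Fin.last (n + 1)) * A 0 0), ?_⟩
  ext i j
  simp only [cyclicFactor, of_apply]
  split_ifs with hji
  · field_simp [hic.1 0, hic.1 (Fin.last (n + 1))]
    linear_combination hic.apply_mul_diag_of_lt hji
  · rw [mul_one, mul_div_assoc', eq_div_iff h, hic.apply_mul_apply_zero_last_of_le (not_lt.1 hji)]

end InvCyclic

theorem inv_eq_inv_smul_of_mul_eq_smul_one {K ι : Type*} [Field K] [Fintype ι] [DecidableEq ι]
    {A C : Matrix ι ι K} {c : K} (hA : A.det ≠ 0) (hC : C ≠ 0) (h : A * C = c • 1) :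
    A⁻¹ = c⁻¹ • C := by
  have hc : c ≠ 0 := by
    rintro rfl
    apply hC
    simpa [← Matrix.mul_assoc, nonsing_inv_mul _ (isUnit_iff_ne_zero.2 hA)] using
      congrArg (A⁻¹ * ·) h
  exact inv_eq_right_inv (by rw [Matrix.mul_smul, h, smul_smul, inv_mul_cancel₀ hc, one_smul])

lemma Fin.eq_add_one_iff_val_eq_or_last {n : ℕ} {i j : Fin (n + 2)} :
    j = i + 1 ↔ (j : ℕ) = i + 1 ∨ (i = Fin.last (n + 1) ∧ j = 0) := by
  rcases eq_or_ne i (Fin.last (n + 1)) with rfl | hi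
  · rw [Fin.last_add_one, Fin.val_last]
    have := j.isLt
    simp only [true_and]
    omega
  · rw [Fin.ext_iff (b := i + 1), Fin.val_add_one, if_neg hi]
    simp [hi]

theorem stmt6 {n : ℕ} (A : Matrix (Fin (n + 2)) (Fin (n + 2)) ℝ) (hdet : A.det ≠ 0)
    (hfull : ∀ i j, A i j ≠ 0) (hic : InvCyclic A) :
    A⁻¹ = Matrix.of fun (i j : Fin (n + 2)) =>
      if (j : ℕ) = (i : ℕ) + 1 then
        -A i j * (∏ k ∈ Finset.univ \ {i, j}, A k k) / (diagProd A - cycProd A)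
      else if i = Fin.last (n + 1) ∧ j = 0 then
        -A i j * (∏ k ∈ Finset.univ \ {i, j}, A k k) / (diagProd A - cycProd A)
      else if i = j then (∏ k ∈ Finset.univ \ {i}, A k k) / (diagProd A - cycProd A)
      else 0 := by
  obtain ⟨u, v, t, rfl⟩ := hic.exists_eq_cyclicFactor (hfull 0 _)
  have hmul := mul_cyclicAdjugate _ t (fun _ _ => cyclicFactor_mul_diag_pred u v t)
    (cyclicFactor_pred_mul_pred u v t)
  have hC : cyclicAdjugate (cyclicFactor u v t) ≠ 0 := by
    refine ne_of_apply_ne (fun C => C 0 0) ?_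
    simpa [cyclicAdjugate] using prod_ne_zero_iff.2 fun k _ => hfull k k
  have hD : diagProd (cyclicFactor u v t) - cycProd (cyclicFactor u v t)
      = (1 - t) * ∏ k, cyclicFactor u v t k k := by
    rw [diagProd, cycProd, prod_cyclicFactor_add_one]
    ring
  rw [inv_eq_inv_smul_of_mul_eq_smul_one hdet hC hmul, hD]
  ext i j
  simp only [← ite_or, ← Fin.eq_add_one_iff_val_eq_or_last, Matrix.smul_apply,
    cyclicAdjugate, of_apply, smul_eq_mul]
  split_ifs <;> ring
end

section
/- Let A ∈ M_n(ℝ) be nonsingular. Then A is a full matrix with the inverse cyclic property if and only if A^{-1} is a bdsw matrix. -/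
/-!
Put `w i = a (i, i + 1) / a (i, i)`, indices mod the order. The inverse cyclic relations say
exactly that a full matrix factors as `diagonal (fun i => a (i, i)) * arcMatrix w`, the `(i, j)`
entry of `arcMatrix w` being the product of `w` along the cyclic arc from `i` to `j`; and a bdsw
matrix is exactly one of the form `(1 - cycShift w) * diagonal d`. The two shapes are inverse to
each other up to diagonal factors, because `(1 - cycShift w) * arcMatrix w = (1 - ∏ w) • 1`, and
invertibility of either factor forces `∏ w ≠ 1`.
-/

open Matrix Finset

theorem Fin.coe_sub_eq_ite {m : ℕ} (a b : Fin m) :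
    ((a - b : Fin m) : ℕ) = if b ≤ a then (a : ℕ) - b else m + a - b := by
  split_ifs with h
  · exact Fin.coe_sub_iff_le.mpr h
  · exact Fin.coe_sub_iff_lt.mpr (not_le.mp h)

theorem Fin.coe_sub_add_one_add_one_of_ne {m : ℕ} [NeZero m] {i j : Fin m} (h : i ≠ j) :
    ((j - (i + 1) : Fin m) : ℕ) + 1 = (j - i : Fin m) := by
  have hne : (j - i : Fin m) ≠ 0 := sub_ne_zero.mpr h.symm
  rw [← sub_sub, Fin.val_sub_one_of_ne_zero hne]
  have := Fin.val_ne_zero_iff.mpr hne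
  omega

theorem Fin.coe_self_sub_add_one_add_one {m : ℕ} [NeZero m] (i : Fin m) :
    ((i - (i + 1) : Fin m) : ℕ) + 1 = m := by
  obtain ⟨k, rfl⟩ := Nat.exists_eq_succ_of_ne_zero (NeZero.ne m)
  rw [sub_add_eq_sub_sub, sub_self, zero_sub, Fin.coe_neg_one]

section Arc

open Fin.NatCast

variable {M : Type*} [CommMonoid M] {m : ℕ} [NeZero m]

/-- The product `w i * w (i + 1) * ⋯ * w (j - 1)` along the cyclic arc from `i` to `j`
(empty for `j = i`). -/
def arcProd (w : Fin m → M) (i j : Fin m) : M :=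
  ∏ t ∈ range (j - i : Fin m), w (i + t)

@[simp]
theorem arcProd_self (w : Fin m → M) (i : Fin m) : arcProd w i i = 1 := by
  simp [arcProd]

theorem arcProd_mul_arcProd (w : Fin m → M) {i k j : Fin m}
    (h : ((k - i : Fin m) : ℕ) + (j - k : Fin m) = (j - i : Fin m)) :
    arcProd w i k * arcProd w k j = arcProd w i j := by
  rw [arcProd, arcProd, arcProd, ← h, prod_range_add]
  congr 1
  refine prod_congr rfl fun t _ => ?_
  rw [Nat.cast_add, Fin.cast_val_eq_self, ← add_assoc, add_sub_cancel]

theorem prod_range_succ_comp_add (w : Fin m → M) (i : Fin m) (d : ℕ) :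
    ∏ t ∈ range (d + 1), w (i + t) = w i * ∏ t ∈ range d, w (i + 1 + t) := by
  rw [prod_range_succ', mul_comm]
  simp only [Nat.cast_add, Nat.cast_one, Nat.cast_zero, add_zero]
  congr 1
  refine prod_congr rfl fun t _ => ?_
  rw [add_assoc, add_comm (t : Fin m)]

theorem arcProd_eq_mul_arcProd_add_one (w : Fin m → M) {i j : Fin m} (h : i ≠ j) :
    arcProd w i j = w i * arcProd w (i + 1) j := by
  rw [arcProd, ← Fin.coe_sub_add_one_add_one_of_ne h, prod_range_succ_comp_add, arcProd]

theorem mul_arcProd_add_one_self (w : Fin m → M) (i : Fin m) :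
    w i * arcProd w (i + 1) i = ∏ k, w k := by
  rw [arcProd, ← prod_range_succ_comp_add, Fin.coe_self_sub_add_one_add_one,
    ← Fin.prod_univ_eq_prod_range (fun t => w (i + t))]
  simp only [Fin.cast_val_eq_self]
  exact Fintype.prod_equiv (Equiv.addLeft i) _ _ fun _ => rfl

end Arc

section CyclicMatrices

variable {m : ℕ} [NeZero m] {R : Type*} [CommRing R]

def arcMatrix (w : Fin m → R) : Matrix (Fin m) (Fin m) R :=
  of (arcProd w)

def cycShift (w : Fin m → R) : Matrix (Fin m) (Fin m) R :=
  of fun i j => if j = i + 1 then w i else 0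

def cycBidiagonal (w : Fin m → R) : Matrix (Fin m) (Fin m) R :=
  1 - cycShift w

theorem cycBidiagonal_mul_arcMatrix (w : Fin m → R) :
    cycBidiagonal w * arcMatrix w = (1 - ∏ i, w i) • 1 := by
  ext i j
  have shift : (cycShift w * arcMatrix w) i j = w i * arcProd w (i + 1) j := by
    simp [mul_apply, cycShift, arcMatrix]
  rw [cycBidiagonal, sub_mul, Matrix.one_mul, Matrix.sub_apply, shift]
  rcases eq_or_ne i j with rfl | hij
  · simp [arcMatrix, mul_arcProd_add_one_self]
  · simp [arcMatrix, arcProd_eq_mul_arcProd_add_one w hij, hij]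

variable {K : Type*} [Field K]

theorem one_sub_prod_ne_zero_of_det_cycBidiagonal_ne_zero {w : Fin m → K}
    (h : (cycBidiagonal w).det ≠ 0) : 1 - ∏ i, w i ≠ 0 := by
  intro hc
  have hE : IsUnit (cycBidiagonal w) := (isUnit_iff_isUnit_det _).mpr h.isUnit
  have : arcMatrix w = 0 := by
    rw [← hE.mul_right_eq_zero, cycBidiagonal_mul_arcMatrix, hc, zero_smul]
  simpa [arcMatrix] using congr_fun₂ this 0 0

-- Not for order `1`: there `cycBidiagonal w = 1 - w 0` vanishes when `w 0 = 1`.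
theorem one_sub_prod_ne_zero_of_det_arcMatrix_ne_zero {n : ℕ} {w : Fin (n + 2) → K}
    (h : (arcMatrix w).det ≠ 0) : 1 - ∏ i, w i ≠ 0 := by
  intro hc
  have hC : IsUnit (arcMatrix w) := (isUnit_iff_isUnit_det _).mpr h.isUnit
  have : cycBidiagonal w = 0 := by
    rw [← hC.mul_left_eq_zero, cycBidiagonal_mul_arcMatrix, hc, zero_smul]
  simpa [cycBidiagonal, cycShift] using congr_fun₂ this 0 0

theorem inv_diagonal_mul_arcMatrix {x w : Fin m → K} (hx : ∀ i, x i ≠ 0)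
    (hc : 1 - ∏ i, w i ≠ 0) :
    (diagonal x * arcMatrix w)⁻¹ =
      cycBidiagonal w * diagonal fun i => (1 - ∏ i, w i)⁻¹ / x i := by
  refine inv_eq_left_inv ?_
  have : (diagonal fun i => (1 - ∏ i, w i)⁻¹ / x i) * diagonal x =
      (1 - ∏ i, w i)⁻¹ • 1 := by
    rw [diagonal_mul_diagonal, smul_one_eq_diagonal]
    congr with i
    field_simp [hx i]
  rw [Matrix.mul_assoc, ← Matrix.mul_assoc (diagonal _), this, smul_mul_assoc, Matrix.one_mul,
    mul_smul_comm, cycBidiagonal_mul_arcMatrix, smul_smul, inv_mul_cancel₀ hc, one_smul]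

theorem inv_cycBidiagonal_mul_diagonal {d w : Fin m → K} (hd : ∀ i, d i ≠ 0)
    (hc : 1 - ∏ i, w i ≠ 0) :
    (cycBidiagonal w * diagonal d)⁻¹ =
      (diagonal fun i => (1 - ∏ i, w i)⁻¹ / d i) * arcMatrix w := by
  refine inv_eq_right_inv ?_
  have : diagonal d * (diagonal fun i => (1 - ∏ i, w i)⁻¹ / d i) =
      (1 - ∏ i, w i)⁻¹ • 1 := by
    rw [diagonal_mul_diagonal, smul_one_eq_diagonal]
    congr with i
    field_simp [hd i]
  rw [Matrix.mul_assoc, ← Matrix.mul_assoc (diagonal d), this, smul_mul_assoc, Matrix.one_mul,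
    mul_smul_comm, cycBidiagonal_mul_arcMatrix, smul_smul, inv_mul_cancel₀ hc, one_smul]

end CyclicMatrices

section Bidiagonal

variable {n : ℕ}

theorem Fin.eq_add_one_iff {i j : Fin (n + 2)} :
    j = i + 1 ↔ (j : ℕ) = i + 1 ∨ i = Fin.last (n + 1) ∧ j = 0 := by
  simp only [Fin.ext_iff, Fin.val_add_one, Fin.val_last, Fin.val_zero]
  split_ifs <;> omega

theorem bdsw_iff {B : Matrix (Fin (n + 2)) (Fin (n + 2)) ℝ} :
    Bdsw B ↔ (∀ i, B i i ≠ 0) ∧ (∀ i, B i (i + 1) ≠ 0) ∧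
      ∀ i j, i ≠ j → j ≠ i + 1 → B i j = 0 := by
  constructor
  · rintro ⟨hdiag, hsucc, hcorner, hzero⟩
    refine ⟨hdiag, fun i => ?_, fun i j hij hj => ?_⟩
    · rcases Fin.eq_add_one_iff.mp (rfl : i + 1 = i + 1) with h | ⟨hi, h⟩
      · exact hsucc i _ h
      · rwa [h, hi]
    · exact hzero i j hij (fun h => hj (Fin.eq_add_one_iff.mpr (.inl h)))
        (fun h => hj (Fin.eq_add_one_iff.mpr (.inr h)))
  · rintro ⟨hdiag, hsucc, hzero⟩
    refine ⟨hdiag, fun i j h => ?_, ?_, fun i j hij h h' => hzero i j hij fun hj => ?_⟩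
    · rw [Fin.eq_add_one_iff.mpr (.inl h)]
      exact hsucc i
    · simpa using hsucc (Fin.last (n + 1))
    · rcases Fin.eq_add_one_iff.mp hj with hj | hj
      exacts [h hj, h' hj]

theorem bdsw_cycBidiagonal_mul_diagonal {w d : Fin (n + 2) → ℝ} (hw : ∀ i, w i ≠ 0)
    (hd : ∀ i, d i ≠ 0) : Bdsw (cycBidiagonal w * diagonal d) := by
  simp only [bdsw_iff, mul_diagonal, cycBidiagonal, cycShift, Matrix.sub_apply, one_apply,
    of_apply]
  refine ⟨fun i => ?_, fun i => ?_, fun i j hij hj => ?_⟩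
  · simp [hd i]
  · simp [hw i, hd]
  · simp [hij, hj]

theorem Bdsw.exists_eq_cycBidiagonal_mul_diagonal {B : Matrix (Fin (n + 2)) (Fin (n + 2)) ℝ}
    (hB : Bdsw B) : ∃ w d : Fin (n + 2) → ℝ, (∀ i, w i ≠ 0) ∧ (∀ i, d i ≠ 0) ∧
      B = cycBidiagonal w * diagonal d := by
  obtain ⟨hdiag, hsucc, hzero⟩ := bdsw_iff.mp hB
  refine ⟨fun i => -B i (i + 1) / B (i + 1) (i + 1), fun i => B i i,
    fun i => by simp [hsucc, hdiag], hdiag, ?_⟩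
  ext i j
  simp only [mul_diagonal, cycBidiagonal, cycShift, Matrix.sub_apply, one_apply, of_apply]
  by_cases hij : i = j
  · subst hij
    simp
  by_cases hj : j = i + 1
  · subst hj
    rw [if_neg hij, if_pos rfl]
    field_simp [hdiag (i + 1)]
    ring
  · simp [hij, hj, hzero i j hij hj]

end Bidiagonal

section InverseCyclic

variable {n : ℕ}

theorem full_and_invCyclic_diagonal_mul_arcMatrix {x w : Fin (n + 2) → ℝ}
    (hx : ∀ i, x i ≠ 0) (hw : ∀ i, w i ≠ 0) :
    (∀ i j, (diagonal x * arcMatrix w) i j ≠ 0) ∧ InvCyclic (diagonal x * arcMatrix w) := by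
  have split {i k j : Fin (n + 2)}
      (h : ((k - i : Fin (n + 2)) : ℕ) + (j - k : Fin (n + 2)) = (j - i : Fin (n + 2))) :
      x i * arcProd w i j =
        x i * arcProd w i k * (x k * arcProd w k j) / (x k * arcProd w k k) := by
    rw [← arcProd_mul_arcProd w h, arcProd_self]
    field_simp [hx k]
  simp only [InvCyclic, diagonal_mul, arcMatrix, of_apply]
  refine ⟨fun i j => mul_ne_zero (hx i) (prod_ne_zero_iff.mpr fun _ _ => hw _),
    fun i => by simp [hx i], fun i k j hik hkj => split ?_, fun i j hji hi => split ?_,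
    fun j hj => split ?_⟩ <;>
  simp only [Fin.coe_sub_eq_ite, Fin.le_def, Fin.lt_def, Fin.val_last, Fin.val_zero, ne_eq,
    Fin.ext_iff] at * <;>
  split_ifs <;> omega

variable {A : Matrix (Fin (n + 2)) (Fin (n + 2)) ℝ} {w : Fin (n + 2) → ℝ}

theorem InvCyclic.apply_eq_mul_arcProd_of_le (hfull : ∀ i j, A i j ≠ 0) (hA : InvCyclic A)
    (hw : ∀ i, A i (i + 1) = A i i * w i) {i j : Fin (n + 2)} (hij : i ≤ j) :
    A i j = A i i * arcProd w i j := by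
  obtain ⟨d, hd⟩ : ∃ d, (j : ℕ) = i + d := ⟨j - i, by rw [Fin.le_def] at hij; omega⟩
  induction d generalizing i with
  | zero => rw [Fin.ext (hd.trans (add_zero _)), arcProd_self, mul_one]
  | succ d ih =>
    have hne : i ≠ j := fun h => by rw [h] at hd; omega
    have hi1 : ((i + 1 : Fin (n + 2)) : ℕ) = i + 1 :=
      Fin.val_add_one_of_lt (Fin.lt_def.mpr (by rw [Fin.val_last]; omega))
    have step : A i j = A i (i + 1) * A (i + 1) j / A (i + 1) (i + 1) := by
      rcases (Fin.le_def.mpr (by omega) : i + 1 ≤ j).eq_or_lt with h | h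
      · rw [← h]
        field_simp [hfull (i + 1) (i + 1)]
      · exact hA.2.1 i (i + 1) j (Fin.lt_def.mpr (by omega)) h
    rw [step, ih (Fin.le_def.mpr (by omega)) (by omega), hw i,
      arcProd_eq_mul_arcProd_add_one w hne]
    field_simp [hfull (i + 1) (i + 1)]

theorem InvCyclic.apply_last_eq_mul_arcProd (hfull : ∀ i j, A i j ≠ 0) (hA : InvCyclic A)
    (hw : ∀ i, A i (i + 1) = A i i * w i) {j : Fin (n + 2)} (hj : j ≠ Fin.last (n + 1)) :
    A (Fin.last (n + 1)) j = A (Fin.last (n + 1)) (Fin.last (n + 1)) *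
      arcProd w (Fin.last (n + 1)) j := by
  have corner := hw (Fin.last (n + 1))
  rw [Fin.last_add_one] at corner
  rw [hA.2.2.2 j (Fin.lt_last_iff_ne_last.mpr hj), corner,
    hA.apply_eq_mul_arcProd_of_le hfull hw (Fin.zero_le j),
    arcProd_eq_mul_arcProd_add_one w hj.symm, Fin.last_add_one]
  field_simp [hfull 0 0]

theorem InvCyclic.apply_eq_mul_arcProd (hfull : ∀ i j, A i j ≠ 0) (hA : InvCyclic A)
    (hw : ∀ i, A i (i + 1) = A i i * w i) (i j : Fin (n + 2)) :
    A i j = A i i * arcProd w i j := by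
  rcases le_or_gt i j with hij | hji
  · exact hA.apply_eq_mul_arcProd_of_le hfull hw hij
  have hj : j ≠ Fin.last (n + 1) := (hji.trans_le (Fin.le_last i)).ne
  by_cases hi : i = Fin.last (n + 1)
  · subst hi
    exact hA.apply_last_eq_mul_arcProd hfull hw hj
  have split :
      arcProd w i (Fin.last (n + 1)) * arcProd w (Fin.last (n + 1)) j = arcProd w i j := by
    refine arcProd_mul_arcProd w ?_
    simp only [Fin.coe_sub_eq_ite, Fin.le_def, Fin.lt_def, Fin.val_last, Fin.ext_iff] at hji hi ⊢
    split_ifs <;> omega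
  rw [hA.2.2.1 i j hji hi, hA.apply_eq_mul_arcProd_of_le hfull hw (Fin.le_last i),
    hA.apply_last_eq_mul_arcProd hfull hw hj, ← split]
  field_simp [hfull (Fin.last (n + 1)) (Fin.last (n + 1))]

theorem InvCyclic.exists_eq_diagonal_mul_arcMatrix (hfull : ∀ i j, A i j ≠ 0)
    (hA : InvCyclic A) : ∃ x w : Fin (n + 2) → ℝ,
      (∀ i, x i ≠ 0) ∧ (∀ i, w i ≠ 0) ∧ A = diagonal x * arcMatrix w := by
  refine ⟨fun i => A i i, fun i => A i (i + 1) / A i i, fun i => hfull i i,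
    fun i => div_ne_zero (hfull _ _) (hfull i i), ?_⟩
  ext i j
  rw [diagonal_mul, arcMatrix, of_apply]
  exact hA.apply_eq_mul_arcProd hfull (fun i => by field_simp [hfull i i]) i j

end InverseCyclic

theorem stmt7 {n : ℕ} (A : Matrix (Fin (n + 2)) (Fin (n + 2)) ℝ) (hdet : A.det ≠ 0) :
    ((∀ i j, A i j ≠ 0) ∧ InvCyclic A) ↔ Bdsw A⁻¹ := by
  constructor
  · rintro ⟨hfull, hA⟩
    obtain ⟨x, w, hx, hw, rfl⟩ := hA.exists_eq_diagonal_mul_arcMatrix hfull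
    rw [det_mul] at hdet
    have hc := one_sub_prod_ne_zero_of_det_arcMatrix_ne_zero (right_ne_zero_of_mul hdet)
    rw [inv_diagonal_mul_arcMatrix hx hc]
    exact bdsw_cycBidiagonal_mul_diagonal hw fun i => div_ne_zero (inv_ne_zero hc) (hx i)
  · intro hB
    obtain ⟨w, d, hw, hd, hBeq⟩ := hB.exists_eq_cycBidiagonal_mul_diagonal
    have hinvdet : (cycBidiagonal w * diagonal d).det ≠ 0 := by
      rw [← hBeq]; exact (isUnit_nonsing_inv_det A hdet.isUnit).ne_zero
    rw [det_mul] at hinvdet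
    have hc := one_sub_prod_ne_zero_of_det_cycBidiagonal_ne_zero (left_ne_zero_of_mul hinvdet)
    rw [← nonsing_inv_nonsing_inv A hdet.isUnit, hBeq, inv_cycBidiagonal_mul_diagonal hd hc]
    exact full_and_invCyclic_diagonal_mul_arcMatrix
      (fun i => div_ne_zero (inv_ne_zero hc) (hd i)) hw
end

section
/- If A is a nonsingular matrix with the inverse cyclic property and B = A^{-1}, then a_{ii}b_{ii} = d/(d-c) for every i, where d is the product of diagonal entries of A and c is the cyclic product; in particular a_{ii}b_{ii} = a_{i+1,i+1}b_{i+1,i+1} for all 1 ≤ i ≤ n-1. -/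
open Matrix Finset

/-!
The inverse cyclic relations say that `A` is, up to diagonal scalings on both sides, the matrix
with ones on and above the diagonal and a constant `q = a_{n1}a_{1n}/(a_{11}a_{nn})` below it:
`a_{ij} = u_i v_j` for `i ≤ j` and `a_{ij} = q u_i v_j` for `i > j`.
That matrix has the explicit inverse `(1 - q)⁻¹ (I - P)`, where `P` is the cyclic shift with
weight `q` on its wrap-around entry, so every `a_{ii} b_{ii}` equals `(1 - q)⁻¹`.
The cyclic product picks up exactly one factor `q`, at the entry `a_{n1}`, so `c = q d`
and `d / (d - c) = (1 - q)⁻¹` as well. Nonsingularity of `A` is what rules out `q = 1`.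
-/

namespace Matrix

variable {K : Type*} [Field K] {n : ℕ}

def lowerScaledOnes (q : K) : Matrix (Fin (n + 2)) (Fin (n + 2)) K :=
  fun i j => if j < i then q else 1

def cyclicShift (q : K) : Matrix (Fin (n + 2)) (Fin (n + 2)) K :=
  fun i j => if i = j - 1 then (if j = 0 then q else 1) else 0

theorem lowerScaledOnes_mul_one_sub_cyclicShift (q : K) :
    lowerScaledOnes (n := n) q * (1 - cyclicShift q) = (1 - q) • 1 := by
  ext i j
  rw [Matrix.mul_sub, Matrix.mul_one, sub_apply, mul_apply]
  simp only [cyclicShift, mul_ite, mul_zero, Finset.sum_ite_eq', Finset.mem_univ, if_true,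
    smul_apply, one_apply, smul_eq_mul, lowerScaledOnes]
  rcases eq_or_ne j 0 with rfl | hj
  · rcases eq_or_ne i 0 with rfl | hi
    · simp
    · have hlast : ¬ (-1 : Fin (n + 2)) < i := by
        rw [not_lt, Fin.le_def, Fin.coe_neg_one]; omega
      simp [Fin.pos_of_ne_zero hi, hi, hlast]
  · have hpred : j - 1 < i ↔ j ≤ i := by have := Fin.pos_of_ne_zero hj; fin_omega
    simp only [hpred, hj, if_false, mul_one]
    rcases lt_trichotomy i j with h | rfl | h
    · simp [h.ne, not_lt.2 h.le, not_le.2 h]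
    · simp
    · simp [h.ne', h, h.le]

theorem cyclicShift_apply_self (q : K) (i : Fin (n + 2)) : cyclicShift q i i = 0 := by
  simp [cyclicShift, eq_comm (a := i), sub_eq_self]

theorem det_lowerScaledOnes_one : (lowerScaledOnes (n := n) (1 : K)).det = 0 :=
  det_zero_of_row_eq (i := 0) (j := 1) zero_ne_one (by ext; simp [lowerScaledOnes])

theorem prod_lowerScaledOnes_apply_add_one (q : K) :
    ∏ i : Fin (n + 2), lowerScaledOnes q i (i + 1) = q := by
  simp [lowerScaledOnes, Fin.add_one_lt_iff]

def cyclicSemiseparable (u v : Fin (n + 2) → K) (q : K) : Matrix (Fin (n + 2)) (Fin (n + 2)) K :=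
  diagonal u * lowerScaledOnes q * diagonal v

variable {u v : Fin (n + 2) → K} {q : K}

theorem cyclicSemiseparable_apply (i j : Fin (n + 2)) :
    cyclicSemiseparable u v q i j = u i * lowerScaledOnes q i j * v j := by
  simp [cyclicSemiseparable, diagonal_mul, mul_diagonal]

theorem cyclicSemiseparable_apply_self (i : Fin (n + 2)) :
    cyclicSemiseparable u v q i i = u i * v i := by
  simp [cyclicSemiseparable_apply, lowerScaledOnes]

theorem inv_cyclicSemiseparable (hu : ∀ i, u i ≠ 0) (hv : ∀ i, v i ≠ 0) (hq : q ≠ 1) :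
    (cyclicSemiseparable u v q)⁻¹ =
      (1 - q)⁻¹ • (diagonal v⁻¹ * (1 - cyclicShift q) * diagonal u⁻¹) := by
  have hu' : diagonal u * diagonal u⁻¹ = 1 := by
    rw [diagonal_mul_diagonal, ← diagonal_one]
    exact congrArg diagonal (funext fun i => mul_inv_cancel₀ (hu i))
  have hv' : diagonal v * diagonal v⁻¹ = 1 := by
    rw [diagonal_mul_diagonal, ← diagonal_one]
    exact congrArg diagonal (funext fun i => mul_inv_cancel₀ (hv i))
  apply inv_eq_right_inv
  calc cyclicSemiseparable u v q *
        ((1 - q)⁻¹ • (diagonal v⁻¹ * (1 - cyclicShift q) * diagonal u⁻¹))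
      = (1 - q)⁻¹ • (diagonal u * (lowerScaledOnes q * (diagonal v * diagonal v⁻¹) *
          (1 - cyclicShift q)) * diagonal u⁻¹) := by
        simp only [cyclicSemiseparable, Matrix.mul_smul, Matrix.mul_assoc]
    _ = 1 := by
        rw [hv', Matrix.mul_one, lowerScaledOnes_mul_one_sub_cyclicShift, Matrix.mul_smul,
          Matrix.smul_mul, Matrix.mul_one, hu', smul_smul,
          inv_mul_cancel₀ (sub_ne_zero.2 hq.symm), one_smul]

theorem cyclicSemiseparable_apply_self_mul_inv_apply_self
    (hdet : (cyclicSemiseparable u v q).det ≠ 0) (i : Fin (n + 2)) :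
    cyclicSemiseparable u v q i i * (cyclicSemiseparable u v q)⁻¹ i i = (1 - q)⁻¹ := by
  rw [cyclicSemiseparable, det_mul, det_mul, det_diagonal, det_diagonal] at hdet
  obtain ⟨⟨hu, hM⟩, hv⟩ := mul_ne_zero_iff.1 hdet |>.imp_left mul_ne_zero_iff.1
  have hq : q ≠ 1 := by rintro rfl; exact hM det_lowerScaledOnes_one
  have hu : ∀ i, u i ≠ 0 := fun i => Finset.prod_ne_zero_iff.1 hu i (Finset.mem_univ i)
  have hv : ∀ i, v i ≠ 0 := fun i => Finset.prod_ne_zero_iff.1 hv i (Finset.mem_univ i)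
  rw [inv_cyclicSemiseparable hu hv hq, cyclicSemiseparable_apply_self]
  simp only [smul_apply, diagonal_mul, mul_diagonal, sub_apply, one_apply_eq,
    cyclicShift_apply_self, sub_zero, mul_one, Pi.inv_apply, smul_eq_mul]
  field_simp [hu i, hv i]

end Matrix

theorem cycProd_cyclicSemiseparable {n : ℕ} (u v : Fin (n + 2) → ℝ) (q : ℝ) :
    cycProd (cyclicSemiseparable u v q) = q * diagProd (cyclicSemiseparable u v q) := by
  have hshift := Equiv.prod_comp (Equiv.addRight (1 : Fin (n + 2))) v
  simp only [Equiv.coe_addRight] at hshift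
  simp only [diagProd, cyclicSemiseparable_apply_self]
  simp only [cycProd, cyclicSemiseparable_apply, Finset.prod_mul_distrib,
    prod_lowerScaledOnes_apply_add_one, hshift]
  ring

namespace InvCyclic

variable {n : ℕ} {A : Matrix (Fin (n + 2)) (Fin (n + 2)) ℝ}

theorem mul_eq_mul_of_le (hA : InvCyclic A) {a b c : Fin (n + 2)} (hab : a ≤ b) (hbc : b ≤ c) :
    A a b * A b c = A a c * A b b := by
  rcases hab.eq_or_lt with rfl | hab
  · ring
  rcases hbc.eq_or_lt with rfl | hbc
  · ring
  rw [hA.2.1 a b c hab hbc, div_mul_cancel₀ _ (hA.1 b)]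

theorem apply_mul_of_le (hA : InvCyclic A) {i j : Fin (n + 2)} (hij : i ≤ j) :
    A i j * A 0 (Fin.last _) = A i (Fin.last _) * A 0 j := by
  apply mul_right_cancel₀ (hA.1 i)
  linear_combination A i (Fin.last _) * hA.mul_eq_mul_of_le (Fin.zero_le i) hij -
    A i j * hA.mul_eq_mul_of_le (Fin.zero_le i) (Fin.le_last i)

theorem apply_mul_of_lt (hA : InvCyclic A) {i j : Fin (n + 2)} (hji : j < i) :
    A i j * (A 0 0 * A (Fin.last _) (Fin.last _)) =
      A i (Fin.last _) * A (Fin.last _) 0 * A 0 j := by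
  have hlast := hA.2.2.2 j (hji.trans_le (Fin.le_last i))
  have h00 := hA.1 0
  have hLL := hA.1 (Fin.last (n + 1))
  by_cases hi : i = Fin.last _
  · subst hi
    rw [hlast]
    field_simp
  · rw [hA.2.2.1 i j hji hi, hlast]
    field_simp

theorem exists_eq_cyclicSemiseparable (hA : InvCyclic A) (h0L : A 0 (Fin.last _) ≠ 0) :
    ∃ u v : Fin (n + 2) → ℝ, ∃ q : ℝ, A = cyclicSemiseparable u v q := by
  refine ⟨fun i => A i (Fin.last _) / A 0 (Fin.last _), fun j => A 0 j,
    A (Fin.last _) 0 * A 0 (Fin.last _) / (A 0 0 * A (Fin.last _) (Fin.last _)), ?_⟩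
  ext i j
  have h00 := hA.1 0
  have hLL := hA.1 (Fin.last (n + 1))
  rw [cyclicSemiseparable_apply, lowerScaledOnes]
  split_ifs with hji
  · field_simp
    linear_combination hA.apply_mul_of_lt hji
  · field_simp
    linear_combination hA.apply_mul_of_le (not_lt.1 hji)

end InvCyclic

theorem stmt8 {n : ℕ} (A : Matrix (Fin (n + 2)) (Fin (n + 2)) ℝ) (hdet : A.det ≠ 0)
    (hfull : ∀ i j, A i j ≠ 0) (hic : InvCyclic A) :
    (∀ i, A i i * A⁻¹ i i = diagProd A / (diagProd A - cycProd A)) ∧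
    (∀ i : Fin (n + 1), A i.castSucc i.castSucc * A⁻¹ i.castSucc i.castSucc =
      A i.succ i.succ * A⁻¹ i.succ i.succ) := by
  obtain ⟨u, v, q, rfl⟩ := hic.exists_eq_cyclicSemiseparable (hfull 0 _)
  have hd : diagProd (cyclicSemiseparable u v q) ≠ 0 :=
    Finset.prod_ne_zero_iff.2 fun i _ => hic.1 i
  have hratio : diagProd (cyclicSemiseparable u v q) /
      (diagProd (cyclicSemiseparable u v q) - cycProd (cyclicSemiseparable u v q)) =
        (1 - q)⁻¹ := by
    rw [cycProd_cyclicSemiseparable, ← one_sub_mul, div_mul_cancel_right₀ hd]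
  have hdiag := cyclicSemiseparable_apply_self_mul_inv_apply_self hdet
  exact ⟨fun i => (hdiag i).trans hratio.symm, fun i => (hdiag _).trans (hdiag _).symm⟩
end

section
/- Every principal submatrix of an inverse cyclic matrix (on a set of indices taken in increasing order) again has the inverse cyclic property. -/
open Matrix Finset

/-- The inverse cyclic property for a matrix of order `m + 1`. -/
def InvCyclicF {m : ℕ} (A : Matrix (Fin (m + 1)) (Fin (m + 1)) ℝ) : Prop :=
  (∀ i, A i i ≠ 0) ∧
  (∀ i k j : Fin (m + 1), i < k → k < j → A i j = A i k * A k j / A k k) ∧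
  (∀ i j : Fin (m + 1), j < i → i ≠ Fin.last m →
    A i j = A i (Fin.last m) * A (Fin.last m) j / A (Fin.last m) (Fin.last m)) ∧
  (∀ j : Fin (m + 1), j < Fin.last m →
    A (Fin.last m) j = A (Fin.last m) 0 * A 0 j / A 0 0)

theorem stmt9 {n m : ℕ} (A : Matrix (Fin (n + 1)) (Fin (n + 1)) ℝ) (hA : InvCyclicF A)
    (α : Finset (Fin (n + 1))) (hcard : α.card = m + 1) :
    InvCyclicF (A.submatrix (α.orderEmbOfFin hcard) (α.orderEmbOfFin hcard)) := by
  obtain ⟨h0, h2, h3, h4⟩ := hA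
  set e := α.orderEmbOfFin hcard with he
  have hmono : StrictMono e := (α.orderEmbOfFin hcard).strictMono
  set N := Fin.last n with hN
  -- lower-left-corner formula
  have L : ∀ u v : Fin (n + 1), u ≤ v → A 0 v = A 0 u * A u v / A u u := by
    intro u v huv
    rcases eq_or_lt_of_le (Fin.zero_le u) with h | h
    · rw [← h]; field_simp [h0 0]
    · rcases eq_or_lt_of_le huv with h' | h'
      · rw [h']; field_simp [h0 v]
      · exact h2 0 u v h h'
  have H : ∀ b y : Fin (n + 1), y < b →
      A b y = (if b = N then A N 0 else A b N * A N 0 / A N N) * A 0 y / A 0 0 := by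
    intro b y hyb
    by_cases hb : b = N
    · rw [if_pos hb, hb]
      exact h4 y (hb ▸ hyb)
    · rw [if_neg hb]
      have hbN : b < N := lt_of_le_of_ne (Fin.le_last b) hb
      rw [h3 b y hyb hb, h4 y (lt_trans hyb hbN)]
      ring_nf
  refine ⟨?_, ?_, ?_, ?_⟩
  · intro i; simpa using h0 (e i)
  · intro i k j hik hkj
    simp only [Matrix.submatrix_apply]
    exact h2 _ _ _ (hmono hik) (hmono hkj)
  · intro i j hji hi
    simp only [Matrix.submatrix_apply]
    have hib : e i < e (Fin.last m) := hmono (lt_of_le_of_ne (Fin.le_last i) hi)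
    have hji' : e j < e i := hmono hji
    by_cases hb : e (Fin.last m) = N
    · rw [hb]
      exact h3 _ _ hji' (ne_of_lt (hb ▸ hib))
    · have hbN : e (Fin.last m) < N := lt_of_le_of_ne (Fin.le_last _) hb
      have hx : A (e i) (e j) = A (e i) N * A N (e j) / A N N :=
        h3 _ _ hji' (ne_of_lt (hib.trans hbN))
      have hxb : A (e i) N = A (e i) (e (Fin.last m)) * A (e (Fin.last m)) N /
          A (e (Fin.last m)) (e (Fin.last m)) := h2 _ _ _ hib hbN
      have hby : A (e (Fin.last m)) (e j) = A (e (Fin.last m)) N * A N (e j) / A N N :=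
        h3 _ _ (hji'.trans hib) hb
      rw [hx, hxb, hby]
      field_simp [h0 N, h0 (e (Fin.last m))]
  · intro j hj
    simp only [Matrix.submatrix_apply]
    have hzy : e 0 ≤ e j := hmono.monotone (Fin.zero_le j)
    have hyb : e j < e (Fin.last m) := hmono hj
    rcases eq_or_lt_of_le hzy with hzj | hzj
    · rw [← hzj]; field_simp [h0 (e 0)]
    · have hzb : e 0 < e (Fin.last m) := hzj.trans hyb
      rw [H _ _ hyb, H _ _ hzb, L (e 0) (e j) hzy]
      field_simp [h0 0, h0 (e 0)]
end

section
/- If A is an entrywise positive n×n matrix with the inverse cyclic property and d - c > 0, then A is nonsingular and A^{-1} is a Z-matrix (all off-diagonal entries nonpositive) with positive diagonal entries. -/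
open Matrix Finset

/-!
Writing `u` for the first row of `A`, the inverse cyclic relations force
`A = diag (aᵢᵢ / uᵢ) * T r * diag u`, where `T r` has ones on and above the diagonal and `r`
below it. For such a matrix `c = d * r`, so positivity and `d - c > 0` give `0 ≤ r < 1`.
Finally `(T r)⁻¹ = (1 - r)⁻¹ (1 - S)` with `S` a nonnegative weighted cyclic shift, a Z-matrix
with positive diagonal, and scaling by positive diagonal matrices preserves these signs.
-/

namespace Matrix

section StepMatrix

variable {K : Type*} [Field K] {n : ℕ} {r : K}

def stepMatrix (m : ℕ) (r : K) : Matrix (Fin m) (Fin m) K :=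
  of fun i j => if i ≤ j then 1 else r

/-- `1 - S`, where `S` is the cyclic shift `i ↦ i + 1` whose wrap-around entry is weighted by `r`. -/
def cyclicDiffMatrix (n : ℕ) (r : K) : Matrix (Fin (n + 2)) (Fin (n + 2)) K :=
  of fun i j => if j = i then 1 else if j = i + 1 then (if j = 0 then -r else -1) else 0

theorem cyclicDiffMatrix_mul_stepMatrix (n : ℕ) (r : K) :
    cyclicDiffMatrix n r * stepMatrix (n + 2) r = (1 - r) • 1 := by
  ext i k
  have hi : i + 1 ≠ i := by simp
  rw [mul_apply, Fintype.sum_eq_add i (i + 1) hi.symm]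
  · simp only [cyclicDiffMatrix, stepMatrix, of_apply, if_neg hi, smul_apply, one_apply, smul_eq_mul]
    induction i using Fin.lastCases with
    | last =>
      rcases eq_or_ne (Fin.last (n + 1)) k with rfl | hk
      · simp [sub_eq_add_neg]
      · simp [Fin.last_le_iff, hk, hk.symm]
    | cast j =>
      rw [Fin.coeSucc_eq_succ]
      rcases lt_trichotomy j.castSucc k with hk | rfl | hk
      · simp [hk.le, Fin.castSucc_lt_iff_succ_le.mp hk, hk.ne]
      · simp [Fin.castSucc_lt_succ.not_ge, sub_eq_add_neg]
      · simp [hk.not_ge, hk.ne', (hk.trans Fin.castSucc_lt_succ).not_ge]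
  · rintro x ⟨hxi, hxi1⟩
    simp [cyclicDiffMatrix, hxi, hxi1]

theorem smul_cyclicDiffMatrix_mul_stepMatrix (hr : r ≠ 1) :
    ((1 - r)⁻¹ • cyclicDiffMatrix n r) * stepMatrix (n + 2) r = 1 := by
  rw [smul_mul_assoc, cyclicDiffMatrix_mul_stepMatrix, smul_smul,
    inv_mul_cancel₀ (sub_ne_zero.mpr hr.symm), one_smul]

theorem inv_stepMatrix (hr : r ≠ 1) :
    (stepMatrix (n + 2) r)⁻¹ = (1 - r)⁻¹ • cyclicDiffMatrix n r :=
  inv_eq_left_inv (smul_cyclicDiffMatrix_mul_stepMatrix hr)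

theorem det_stepMatrix_ne_zero (hr : r ≠ 1) : (stepMatrix (n + 2) r).det ≠ 0 :=
  det_ne_zero_of_left_inverse (smul_cyclicDiffMatrix_mul_stepMatrix hr)

variable [LinearOrder K] [IsStrictOrderedRing K]

theorem inv_stepMatrix_apply_nonpos (hr₀ : 0 ≤ r) (hr₁ : r < 1) {i j : Fin (n + 2)}
    (hij : i ≠ j) : (stepMatrix (n + 2) r)⁻¹ i j ≤ 0 := by
  have : 0 ≤ (1 - r)⁻¹ := inv_nonneg.mpr (sub_nonneg.mpr hr₁.le)
  rw [inv_stepMatrix hr₁.ne, smul_apply, smul_eq_mul]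
  refine mul_nonpos_of_nonneg_of_nonpos this ?_
  simp only [cyclicDiffMatrix, of_apply, if_neg hij.symm]
  split_ifs <;> linarith

theorem inv_stepMatrix_apply_self_pos (hr₁ : r < 1) (i : Fin (n + 2)) :
    0 < (stepMatrix (n + 2) r)⁻¹ i i := by
  simpa [inv_stepMatrix hr₁.ne, cyclicDiffMatrix] using hr₁

end StepMatrix

variable {K ι : Type*} [Field K] [Fintype ι] [DecidableEq ι]

theorem inv_diagonal_of_ne_zero {p : ι → K} (hp : ∀ i, p i ≠ 0) :
    (diagonal p)⁻¹ = diagonal p⁻¹ :=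
  inv_eq_left_inv (by simp [diagonal_mul_diagonal, inv_mul_cancel₀ (hp _)])

theorem inv_diagonal_mul_mul_diagonal_apply (M : Matrix ι ι K) {p q : ι → K}
    (hp : ∀ i, p i ≠ 0) (hq : ∀ i, q i ≠ 0) (i j : ι) :
    (diagonal p * M * diagonal q)⁻¹ i j = (q i)⁻¹ * M⁻¹ i j * (p j)⁻¹ := by
  rw [mul_inv_rev, mul_inv_rev, inv_diagonal_of_ne_zero hp, inv_diagonal_of_ne_zero hq,
    ← Matrix.mul_assoc]
  simp [diagonal_mul, mul_diagonal]

end Matrix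

theorem cycProd_diagonal_mul_stepMatrix_mul_diagonal {n : ℕ} (p q : Fin (n + 2) → ℝ) (r : ℝ) :
    cycProd (diagonal p * stepMatrix (n + 2) r * diagonal q) =
      diagProd (diagonal p * stepMatrix (n + 2) r * diagonal q) * r := by
  have hshift : ∏ i : Fin (n + 2), q (i + 1) = ∏ i, q i :=
    Fintype.prod_equiv (Equiv.addRight 1) _ _ fun _ => rfl
  have hstep : ∏ i : Fin (n + 2), stepMatrix (n + 2) r i (i + 1) = r := by
    rw [Fin.prod_univ_castSucc]
    simp [stepMatrix, Fin.coeSucc_eq_succ, Fin.castSucc_lt_succ.le]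
  simp only [cycProd, diagProd, diagonal_mul, mul_diagonal, prod_mul_distrib, hshift, hstep]
  simp [stepMatrix]
  ring

namespace InvCyclic

variable {n : ℕ} {A : Matrix (Fin (n + 2)) (Fin (n + 2)) ℝ}

theorem apply_of_le (hA : InvCyclic A) (h₀ : ∀ j, A 0 j ≠ 0) {i j : Fin (n + 2)} (hij : i ≤ j) :
    A i j = A i i / A 0 i * A 0 j := by
  rw [div_mul_eq_mul_div, eq_div_iff (h₀ i)]
  rcases eq_or_ne i 0 with rfl | hi
  · ring
  rcases hij.eq_or_lt with rfl | hij
  · ring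
  have h := hA.2.1 0 i j (Fin.pos_iff_ne_zero.mpr hi) hij
  rw [eq_div_iff (hA.1 i)] at h
  linarith

theorem apply_of_lt (hA : InvCyclic A) (h₀ : ∀ j, A 0 j ≠ 0) {i j : Fin (n + 2)} (hji : j < i) :
    A i j = A i i / A 0 i *
      (A 0 (Fin.last _) * A (Fin.last _) 0 / (A 0 0 * A (Fin.last _) (Fin.last _))) * A 0 j := by
  have hL₀ := hA.2.2.2 j (hji.trans_le (Fin.le_last i))
  have := hA.1 (Fin.last _)
  have := h₀ 0
  have := h₀ i
  rcases eq_or_ne i (Fin.last _) with rfl | hiL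
  · rw [hL₀]
    field_simp
  · rw [hA.2.2.1 i j hji hiL, hL₀, hA.apply_of_le h₀ (Fin.le_last i)]
    field_simp

theorem eq_diagonal_mul_stepMatrix_mul_diagonal (hA : InvCyclic A) (h₀ : ∀ j, A 0 j ≠ 0) :
    ∃ r, A = diagonal (fun i => A i i / A 0 i) * stepMatrix (n + 2) r * diagonal (A 0) := by
  refine ⟨A 0 (Fin.last _) * A (Fin.last _) 0 / (A 0 0 * A (Fin.last _) (Fin.last _)),
    ext fun i j => ?_⟩
  simp only [diagonal_mul, mul_diagonal, stepMatrix, of_apply]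
  split_ifs with hij
  · rw [mul_one, hA.apply_of_le h₀ hij]
  · exact hA.apply_of_lt h₀ (not_le.mp hij)

end InvCyclic

theorem stmt13 {n : ℕ} (A : Matrix (Fin (n + 2)) (Fin (n + 2)) ℝ)
    (hpos : ∀ i j, 0 < A i j) (hic : InvCyclic A) (hdc : 0 < diagProd A - cycProd A) :
    A.det ≠ 0 ∧ (∀ i j, i ≠ j → A⁻¹ i j ≤ 0) ∧ (∀ i, 0 < A⁻¹ i i) := by
  obtain ⟨r, hA⟩ := hic.eq_diagonal_mul_stepMatrix_mul_diagonal fun j => (hpos 0 j).ne'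
  have hcd : cycProd A = diagProd A * r := by
    rw [hA]; exact cycProd_diagonal_mul_stepMatrix_mul_diagonal _ _ r
  have hd : 0 < diagProd A := prod_pos fun i _ => hpos i i
  have hc : 0 < cycProd A := prod_pos fun i _ => hpos i _
  have hr₀ : 0 ≤ r := by nlinarith
  have hr₁ : r < 1 := by nlinarith
  have hp : ∀ i, 0 < A i i / A 0 i := fun i => div_pos (hpos i i) (hpos 0 i)
  rw [hA]
  refine ⟨?_, fun i j hij => ?_, fun i => ?_⟩
  · simp only [det_mul, det_diagonal]
    exact mul_ne_zero (mul_ne_zero (prod_ne_zero_iff.mpr fun i _ => (hp i).ne')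
      (det_stepMatrix_ne_zero hr₁.ne)) (prod_ne_zero_iff.mpr fun i _ => (hpos 0 i).ne')
  · rw [inv_diagonal_mul_mul_diagonal_apply _ (fun i => (hp i).ne') fun i => (hpos 0 i).ne']
    exact mul_nonpos_of_nonpos_of_nonneg
      (mul_nonpos_of_nonneg_of_nonpos (inv_nonneg.mpr (hpos 0 i).le)
        (inv_stepMatrix_apply_nonpos hr₀ hr₁ hij)) (inv_nonneg.mpr (hp j).le)
  · rw [inv_diagonal_mul_mul_diagonal_apply _ (fun i => (hp i).ne') fun i => (hpos 0 i).ne']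
    exact mul_pos (mul_pos (inv_pos.mpr (hpos 0 i)) (inv_stepMatrix_apply_self_pos hr₁ i))
      (inv_pos.mpr (hp i))
end

section
/- Let A be an inverse cyclic full matrix. Every entry of A in the strict upper triangle is determined by the diagonal and super-diagonal entries via a_{ij} = (a_{i,i+1}a_{i+1,i+2}⋯a_{j-1,j})/(a_{i+1,i+1}a_{i+2,i+2}⋯a_{j-1,j-1}) for i+1 < j. -/
open Matrix Finset
open Fin.NatCast

theorem eq_prod_Ico_div_prod_Ico_of_eq_mul_div {K : Type*} [Field K] {N : ℕ} (a : ℕ → ℕ → K)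
    (hdiag : ∀ k < N, a k k ≠ 0)
    (hcyc : ∀ i k j, i < k → k < j → j < N → a i j = a i k * a k j / a k k)
    {i j : ℕ} (hij : i < j) (hjN : j < N) :
    a i j = (∏ t ∈ Ico i j, a t (t + 1)) / ∏ t ∈ Ico (i + 1) j, a t t := by
  induction j, hij using Nat.le_induction with
  | base => simp
  | succ j hij ih =>
    have hden : ∏ t ∈ Ico (i + 1) j, a t t ≠ 0 :=
      prod_ne_zero_iff.2 fun t ht => hdiag t (by grind)
    rw [hcyc i j (j + 1) hij j.lt_succ_self hjN, ih (by omega), prod_Ico_succ_top (by omega),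
      prod_Ico_succ_top hij]
    field_simp [hdiag j (by omega)]

theorem stmt14_general {n : ℕ} (A : Matrix (Fin (n + 2)) (Fin (n + 2)) ℝ)
    (hic : InvCyclic A) :
    ∀ i j : Fin (n + 2), (i : ℕ) + 1 < (j : ℕ) →
      A i j = (∏ t ∈ Finset.Ico (i : ℕ) (j : ℕ),
          A (t : Fin (n + 2)) ((t + 1 : ℕ) : Fin (n + 2))) /
        (∏ t ∈ Finset.Ico ((i : ℕ) + 1) (j : ℕ), A (t : Fin (n + 2)) (t : Fin (n + 2))) := by
  obtain ⟨hdiag, hcyc, -, -⟩ := hic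
  intro i j hij
  have hcycℕ : ∀ i k j : ℕ, i < k → k < j → j < n + 2 →
      A i j = A i k * A k j / A k k := fun i k j hik hkj hj =>
    hcyc _ _ _ (Fin.natCast_strictMono (by omega) hik) (Fin.natCast_strictMono (by omega) hkj)
  simpa using eq_prod_Ico_div_prod_Ico_of_eq_mul_div (fun i j : ℕ => A i j)
    (fun k _ => hdiag k) hcycℕ (by omega : (i : ℕ) < j) j.isLt

theorem stmt14 {n : ℕ} (A : Matrix (Fin (n + 2)) (Fin (n + 2)) ℝ)
    (hfull : ∀ i j, A i j ≠ 0) (hic : InvCyclic A) :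
    ∀ i j : Fin (n + 2), (i : ℕ) + 1 < (j : ℕ) →
      A i j = (∏ t ∈ Finset.Ico (i : ℕ) (j : ℕ),
          A (t : Fin (n + 2)) ((t + 1 : ℕ) : Fin (n + 2))) /
        (∏ t ∈ Finset.Ico ((i : ℕ) + 1) (j : ℕ), A (t : Fin (n + 2)) (t : Fin (n + 2))) :=
  stmt14_general A hic
end

section
/- Let A be an inverse cyclic full matrix. Every strictly lower triangular entry with i ≠ n satisfies a_{ij} = (a_{i,i+1}⋯a_{n-1,n} a_{n1} a_{12}⋯a_{j-1,j})/(a_{i+1,i+1}⋯a_{nn} a_{11}⋯a_{j-1,j-1}) for j < i < n, and a_{nj} = (a_{n1}a_{12}⋯a_{j-1,j})/(a_{11}⋯a_{j-1,j-1}) for j < n. -/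
open Matrix Finset Fin.NatCast

/-!
Above the diagonal the relation `a_{ij} = a_{ik} a_{kj} / a_{kk}` telescopes along the
superdiagonal: `a_{ij} = a_{ii} ∏_{i ≤ t < j} a_{t,t+1} / a_{tt}`. Applied to `a_{1j}`, the last-row
relation `a_{nj} = a_{n1} a_{1j} / a_{11}` gives the second formula; applied to `a_{in}`, together with
the second formula, the relation `a_{ij} = a_{in} a_{nj} / a_{nn}` gives the first.
-/

theorem eq_mul_prod_Ico_of_cyclic {K : Type*} [Field K] {f : ℕ → ℕ → K} {N : ℕ}
    (hf : ∀ i k j, i < k → k < j → j < N → f i j = f i k * f k j / f k k)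
    {i j : ℕ} (hii : f i i ≠ 0) (hij : i ≤ j) (hjN : j < N) :
    f i j = f i i * ∏ t ∈ Ico i j, f t (t + 1) / f t t := by
  induction j, hij using Nat.le_induction with
  | base => simp
  | succ j hij ih =>
    rw [prod_Ico_succ_top hij, ← mul_assoc, ← ih (by omega)]
    rcases hij.eq_or_lt with rfl | hlt
    · field_simp
    · rw [hf i j (j + 1) hlt j.lt_succ_self hjN]
      ring

theorem InvCyclic.entry_eq_mul_prod_Ico {n : ℕ} {A : Matrix (Fin (n + 2)) (Fin (n + 2)) ℝ}
    (hic : InvCyclic A) {i j : ℕ} (hij : i ≤ j) (hj : j ≤ n + 1) :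
    A i j = A i i * ∏ t ∈ Ico i j, A t ((t + 1 : ℕ) : Fin (n + 2)) / A t t :=
  eq_mul_prod_Ico_of_cyclic (f := fun s t ↦ A s t) (N := n + 2)
    (fun _ _ _ hik hkj hjN ↦ hic.2.1 _ _ _
      (Fin.natCast_strictMono (by omega) hik) (Fin.natCast_strictMono (by omega) hkj))
    (hic.1 _) hij (by omega)

theorem InvCyclic.last_row_eq {n : ℕ} {A : Matrix (Fin (n + 2)) (Fin (n + 2)) ℝ}
    (hic : InvCyclic A) (j : Fin (n + 2)) (hj : j < Fin.last (n + 1)) :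
    A (Fin.last (n + 1)) j = (A (Fin.last (n + 1)) 0 *
        ∏ t ∈ range (j : ℕ), A (t : Fin (n + 2)) ((t + 1 : ℕ) : Fin (n + 2))) /
      (∏ t ∈ range (j : ℕ), A (t : Fin (n + 2)) (t : Fin (n + 2))) := by
  have h0j := hic.entry_eq_mul_prod_Ico (Nat.zero_le j) (by omega)
  rw [Nat.cast_zero, Fin.cast_val_eq_self, ← range_eq_Ico, prod_div_distrib] at h0j
  rw [hic.2.2.2 j hj, h0j]
  field_simp [hic.1 0]

theorem stmt15_general {n : ℕ} (A : Matrix (Fin (n + 2)) (Fin (n + 2)) ℝ)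
    (hic : InvCyclic A) :
    (∀ i j : Fin (n + 2), j < i → i ≠ Fin.last (n + 1) →
      A i j = ((∏ t ∈ Finset.Ico (i : ℕ) (n + 1),
            A (t : Fin (n + 2)) ((t + 1 : ℕ) : Fin (n + 2))) *
          A (Fin.last (n + 1)) 0 *
          (∏ t ∈ Finset.range (j : ℕ),
            A (t : Fin (n + 2)) ((t + 1 : ℕ) : Fin (n + 2)))) /
        ((∏ t ∈ Finset.Ico ((i : ℕ) + 1) (n + 2), A (t : Fin (n + 2)) (t : Fin (n + 2))) *
          (∏ t ∈ Finset.range (j : ℕ), A (t : Fin (n + 2)) (t : Fin (n + 2))))) ∧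
    (∀ j : Fin (n + 2), j < Fin.last (n + 1) →
      A (Fin.last (n + 1)) j = (A (Fin.last (n + 1)) 0 *
          ∏ t ∈ Finset.range (j : ℕ),
            A (t : Fin (n + 2)) ((t + 1 : ℕ) : Fin (n + 2))) /
        (∏ t ∈ Finset.range (j : ℕ), A (t : Fin (n + 2)) (t : Fin (n + 2)))) := by
  refine ⟨fun i j hji hil ↦ ?_, hic.last_row_eq⟩
  have hi : (i : ℕ) < n + 1 := Fin.val_lt_last hil
  have hiL := hic.entry_eq_mul_prod_Ico hi.le le_rfl
  rw [Fin.cast_val_eq_self, Fin.natCast_eq_last, prod_div_distrib] at hiL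
  have hD : ∏ t ∈ Ico ((i : ℕ) + 1) (n + 2), A (t : Fin (n + 2)) (t : Fin (n + 2)) =
      (∏ t ∈ Ico (i : ℕ) (n + 1), A (t : Fin (n + 2)) (t : Fin (n + 2))) *
        A (Fin.last (n + 1)) (Fin.last (n + 1)) / A i i := by
    rw [eq_div_iff (hic.1 i), mul_comm]
    calc _ = ∏ t ∈ Ico (i : ℕ) (n + 1 + 1), A (t : Fin (n + 2)) (t : Fin (n + 2)) := by
          rw [prod_eq_prod_Ico_succ_bot (by omega : (i : ℕ) < n + 1 + 1), Fin.cast_val_eq_self]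
      _ = _ := by rw [prod_Ico_succ_top hi.le, Fin.natCast_eq_last]
  have hdiag (s : Finset ℕ) : ∏ t ∈ s, A (t : Fin (n + 2)) (t : Fin (n + 2)) ≠ 0 :=
    prod_ne_zero_iff.mpr fun t _ ↦ hic.1 _
  rw [hic.2.2.1 i j hji hil, hiL, hic.last_row_eq j (hji.trans_le (Fin.le_last i)), hD]
  field_simp [hic.1 i, hic.1 (Fin.last (n + 1)), hdiag]

theorem stmt15 {n : ℕ} (A : Matrix (Fin (n + 2)) (Fin (n + 2)) ℝ)
    (hfull : ∀ i j, A i j ≠ 0) (hic : InvCyclic A) :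
    (∀ i j : Fin (n + 2), j < i → i ≠ Fin.last (n + 1) →
      A i j = ((∏ t ∈ Finset.Ico (i : ℕ) (n + 1),
            A (t : Fin (n + 2)) ((t + 1 : ℕ) : Fin (n + 2))) *
          A (Fin.last (n + 1)) 0 *
          (∏ t ∈ Finset.range (j : ℕ),
            A (t : Fin (n + 2)) ((t + 1 : ℕ) : Fin (n + 2)))) /
        ((∏ t ∈ Finset.Ico ((i : ℕ) + 1) (n + 2), A (t : Fin (n + 2)) (t : Fin (n + 2))) *
          (∏ t ∈ Finset.range (j : ℕ), A (t : Fin (n + 2)) (t : Fin (n + 2))))) ∧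
    (∀ j : Fin (n + 2), j < Fin.last (n + 1) →
      A (Fin.last (n + 1)) j = (A (Fin.last (n + 1)) 0 *
          ∏ t ∈ Finset.range (j : ℕ),
            A (t : Fin (n + 2)) ((t + 1 : ℕ) : Fin (n + 2))) /
        (∏ t ∈ Finset.range (j : ℕ), A (t : Fin (n + 2)) (t : Fin (n + 2)))) :=
  stmt15_general A hic
end

section
/- The circulant matrix A = α_1 I + α_2 Z + ⋯ + α_n Z^{n-1} (with Z the n-cycle permutation matrix and all α_i nonzero) has the inverse cyclic property if and only if α_r = α_2^{r-1}/α_1^{r-2} for r = 3, …, n. -/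
/-
The entries of the circulant matrix are `a_{ij} = α_{j-i}`, indices taken mod `N = n + 2`, so a
condition `a_{ij} a_{kk} = a_{ik} a_{kj}` reads `α_{j-i} α_0 = α_{k-i} α_{j-k}`. Those of the last
row, `k = 0`, say `α_{j+1} α_0 = α_1 α_j`, so `α` is geometric with ratio `α_1 / α_0`. Conversely,
for geometric `α` the condition holds as soon as `(k - i) + (j - k) = j - i` without reduction
mod `N`, i.e. `k` lies on the cyclic arc from `i` to `j`, which is the case in all three families.
-/

open Matrix Finset

/-- The `n`-cycle permutation matrix `Z = (e^n, e^1, …, e^{n-1})`. -/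
def Zmat (n : ℕ) : Matrix (Fin (n + 2)) (Fin (n + 2)) ℝ :=
  Matrix.of fun i j => if j = i + 1 then 1 else 0

lemma Zmat_pow_val_apply {n : ℕ} (r i j : Fin (n + 2)) :
    (Zmat n ^ (r : ℕ)) i j = if j = i + r then 1 else 0 := by
  induction r using Fin.induction generalizing j with
  | zero => simp [Matrix.one_apply, eq_comm]
  | succ r ih =>
    rw [Fin.val_castSucc] at ih
    rw [Fin.val_succ, pow_succ, Matrix.mul_apply, ← Fin.coeSucc_eq_succ, ← add_assoc]
    simp only [ih, ite_mul, one_mul, zero_mul, Finset.sum_ite_eq', Finset.mem_univ, if_true]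
    simp only [Zmat, of_apply]

lemma sum_smul_Zmat_pow_apply {n : ℕ} (α : Fin (n + 2) → ℝ) (i j : Fin (n + 2)) :
    (∑ r : Fin (n + 2), α r • Zmat n ^ (r : ℕ)) i j = α (j - i) := by
  simp [Matrix.sum_apply, Zmat_pow_val_apply, ← sub_eq_iff_eq_add']

theorem Fin.val_sub_add_val_sub {N : ℕ} [NeZero N] {i k j : Fin N}
    (h : ((k - i : Fin N) : ℕ) ≤ (j - i : Fin N)) :
    ((k - i : Fin N) : ℕ) + (j - k : Fin N) = (j - i : Fin N) := by
  rw [← sub_sub_sub_cancel_right j k i, Fin.sub_val_of_le (Fin.le_def.mpr h)]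
  omega

theorem Fin.eq_pow_mul_of_succ {M : Type*} [Monoid M] {m : ℕ} {f : Fin (m + 1) → M} {q : M}
    (h : ∀ i : Fin m, f i.succ = q * f i.castSucc) (r : Fin (m + 1)) :
    f r = q ^ (r : ℕ) * f 0 := by
  induction r using Fin.induction with
  | zero => simp
  | succ r ih => rw [h, ih, Fin.val_succ, Fin.val_castSucc, pow_succ', mul_assoc]

lemma eq_mul_div_of_val_sub_le {K : Type*} [Field K] {N : ℕ} [NeZero N] {α : Fin N → K} {q : K}
    (hα : ∀ r, α r = q ^ (r : ℕ) * α 0) (h0 : α 0 ≠ 0) {i k j : Fin N}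
    (h : ((k - i : Fin N) : ℕ) ≤ (j - i : Fin N)) :
    α (j - i) = α (k - i) * α (j - k) / α 0 := by
  rw [hα (j - i), ← Fin.val_sub_add_val_sub h, hα (k - i), hα (j - k)]
  field_simp
  ring

section Circulant

variable {n : ℕ} {A : Matrix (Fin (n + 2)) (Fin (n + 2)) ℝ} {α : Fin (n + 2) → ℝ}

lemma invCyclic_of_eq_pow_mul (hA : ∀ i j, A i j = α (j - i)) {q : ℝ}
    (hα : ∀ r, α r = q ^ (r : ℕ) * α 0) (h0 : α 0 ≠ 0) : InvCyclic A := by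
  refine ⟨fun i => ?_, fun i k j hik hkj => ?_, fun i j hji _ => ?_, fun j hj => ?_⟩ <;>
    simp only [hA, sub_self]
  · exact h0
  · refine eq_mul_div_of_val_sub_le hα h0 ?_
    rw [Fin.sub_val_of_le hik.le, Fin.sub_val_of_le (hik.trans hkj).le]
    omega
  · refine eq_mul_div_of_val_sub_le hα h0 ?_
    rw [Fin.sub_val_of_le (Fin.le_last i), Fin.coe_sub_iff_lt.mpr hji, Fin.val_last]
    omega
  · refine eq_mul_div_of_val_sub_le hα h0 ?_
    rw [Fin.coe_sub_iff_lt.mpr hj, Fin.coe_sub_iff_lt.mpr Fin.last_pos]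
    simp only [Fin.val_last, Fin.val_zero]
    omega

lemma eq_pow_mul_of_invCyclic (hA : ∀ i j, A i j = α (j - i)) (h : InvCyclic A) (r : Fin (n + 2)) :
    α r = (α 1 / α 0) ^ (r : ℕ) * α 0 := by
  have h0 : α 0 ≠ 0 := by simpa [hA] using h.1 0
  refine Fin.eq_pow_mul_of_succ (fun j => ?_) r
  have hlast := h.2.2.2 j.castSucc (Fin.castSucc_lt_last j)
  simp only [hA, sub_self, sub_zero, zero_sub, Fin.neg_last] at hlast
  rw [sub_eq_add_neg, Fin.neg_last, Fin.coeSucc_eq_succ] at hlast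
  rw [hlast]
  ring

lemma invCyclic_iff_eq_pow_mul (hA : ∀ i j, A i j = α (j - i)) (h0 : α 0 ≠ 0) :
    InvCyclic A ↔ ∀ r, α r = (α 1 / α 0) ^ (r : ℕ) * α 0 :=
  ⟨eq_pow_mul_of_invCyclic hA, fun hα => invCyclic_of_eq_pow_mul hA hα h0⟩

lemma eq_pow_div_pow_iff_eq_pow_mul (h0 : α 0 ≠ 0) :
    (∀ r : Fin (n + 2), 2 ≤ (r : ℕ) → α r = (α 1) ^ (r : ℕ) / (α 0) ^ ((r : ℕ) - 1)) ↔
      ∀ r, α r = (α 1 / α 0) ^ (r : ℕ) * α 0 := by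
  have key (m : ℕ) : (α 1) ^ (m + 1) / (α 0) ^ m = (α 1 / α 0) ^ (m + 1) * α 0 := by
    rw [div_pow, pow_succ (α 0)]
    field_simp
  constructor
  · intro h r
    obtain hr | hr | hr : (r : ℕ) = 0 ∨ (r : ℕ) = 1 ∨ 2 ≤ (r : ℕ) := by omega
    · simp [Fin.val_eq_zero_iff.mp hr]
    · simp [Fin.ext (hr.trans (Fin.val_one n).symm), h0]
    · obtain ⟨m, hm⟩ : ∃ m, (r : ℕ) = m + 1 := ⟨r - 1, by omega⟩
      rw [h r hr, hm, Nat.add_sub_cancel, key]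
  · intro h r hr
    obtain ⟨m, hm⟩ : ∃ m, (r : ℕ) = m + 1 := ⟨r - 1, by omega⟩
    rw [h r, hm, Nat.add_sub_cancel, key]

end Circulant

theorem stmt17 {n : ℕ} (α : Fin (n + 2) → ℝ) (hα : ∀ r, α r ≠ 0)
    (A : Matrix (Fin (n + 2)) (Fin (n + 2)) ℝ)
    (hA : A = ∑ r : Fin (n + 2), α r • Zmat n ^ (r : ℕ)) :
    InvCyclic A ↔
    (∀ r : Fin (n + 2), 2 ≤ (r : ℕ) →
      α r = (α 1) ^ (r : ℕ) / (α 0) ^ ((r : ℕ) - 1)) := by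
  have hAij : ∀ i j, A i j = α (j - i) := fun i j => hA ▸ sum_smul_Zmat_pow_apply α i j
  rw [invCyclic_iff_eq_pow_mul hAij (hα 0), eq_pow_div_pow_iff_eq_pow_mul (hα 0)]
end

section
/- Let A be an n×n type D matrix with parameters a_n > a_{n-1} > ⋯ > a_1 and a_n < 0. Then A is nonsingular and A^{-1} is a tridiagonal matrix with entrywise A < 0 such that A^{-1} is a Z-matrix; consequently A^{-1} is an N-matrix (its inverse A is entrywise negative). -/
/-!
With `L` the lower triangular matrix of ones and `K = L⁻¹` the first-difference matrix, a matrix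
of type D factors as `A = L D Lᵀ`, where `D` is the diagonal of the first differences
`a₀, a₁ - a₀, …, aₙ - aₙ₋₁` of its parameters. Hence `A⁻¹ = Kᵀ D⁻¹ K`. Since `K` is lower
bidiagonal, `Kᵀ D⁻¹ K` is tridiagonal, and its off-diagonal entries are `-(a_k - a_{k-1})⁻¹ < 0`.
Monotonicity and `aₙ < 0` give `a₀ < 0`, so `D` is invertible, and make every entry of `A` negative.
-/

open Matrix

namespace Matrix

section Ring

variable {R : Type*} [Ring R] {m : ℕ}

def lowerOnes (m : ℕ) : Matrix (Fin m) (Fin m) R := of fun i j => if j ≤ i then 1 else 0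

def firstDiff (m : ℕ) : Matrix (Fin m) (Fin m) R :=
  of fun i j => (if i = j then 1 else 0) - if (i : ℕ) = j + 1 then 1 else 0

theorem lowerOnes_mul_firstDiff : lowerOnes m * firstDiff m = (1 : Matrix (Fin m) (Fin m) R) := by
  ext i j
  let f : ℕ → R := fun k =>
    if k ≤ i then (if k = j then 1 else 0) - (if k = j + 1 then 1 else 0) else 0
  have hterm (k : Fin m) : lowerOnes m i k * firstDiff m k j = f k := by
    simp only [f, lowerOnes, firstDiff, of_apply, Fin.le_def, Fin.ext_iff]
    split_ifs <;> first | omega | simp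
  rw [mul_apply, Finset.sum_congr rfl fun k _ => hterm k, Fin.sum_univ_eq_sum_range f m,
    ← Finset.sum_filter, Finset.sum_sub_distrib, Finset.sum_ite_eq', Finset.sum_ite_eq', one_apply]
  simp only [Finset.mem_filter, Finset.mem_range, Fin.ext_iff]
  split_ifs <;> first | omega | simp

theorem lowerOnes_mul_diagonal_mul_transpose_apply (d : Fin m → R) (i j : Fin m) :
    (lowerOnes m * diagonal d * (lowerOnes m)ᵀ : Matrix (Fin m) (Fin m) R) i j =
      (lowerOnes m *ᵥ d) (min i j) := by
  rw [mul_apply]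
  simp only [mul_diagonal, mulVec, dotProduct]
  refine Finset.sum_congr rfl fun k _ => ?_
  simp only [lowerOnes, transpose_apply, of_apply, le_min_iff]
  split_ifs <;> simp_all

theorem lowerOnes_mul_diagonal_firstDiff_mulVec_mul_transpose (a : Fin m → R) :
    lowerOnes m * diagonal (firstDiff m *ᵥ a) * (lowerOnes m)ᵀ = of fun i j => a (min i j) := by
  ext i j
  rw [lowerOnes_mul_diagonal_mul_transpose_apply, mulVec_mulVec, lowerOnes_mul_firstDiff,
    one_mulVec, of_apply]

theorem firstDiff_mulVec_zero (a : Fin (m + 1) → R) : (firstDiff (m + 1) *ᵥ a) 0 = a 0 := by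
  simp [firstDiff, mulVec, dotProduct]

theorem firstDiff_mulVec_succ (a : Fin (m + 1) → R) (k : Fin m) :
    (firstDiff (m + 1) *ᵥ a) k.succ = a k.succ - a k.castSucc := by
  simp only [firstDiff, mulVec, dotProduct, of_apply, sub_mul, Finset.sum_sub_distrib, ite_mul,
    one_mul, zero_mul]
  rw [Fintype.sum_eq_single k.succ, Fintype.sum_eq_single k.castSucc] <;>
    simp_all [Fin.ext_iff, eq_comm]

theorem firstDiff_transpose_mul_diagonal_mul_apply_eq_zero (e : Fin m → R) {i j : Fin m}
    (hij : (i : ℕ) + 1 < j ∨ (j : ℕ) + 1 < i) :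
    ((firstDiff m)ᵀ * diagonal e * firstDiff m : Matrix (Fin m) (Fin m) R) i j = 0 := by
  rw [mul_apply]
  simp only [mul_diagonal, transpose_apply]
  refine Finset.sum_eq_zero fun k _ => ?_
  simp only [firstDiff, of_apply, Fin.ext_iff]
  split_ifs <;> first | omega | simp

theorem firstDiff_transpose_mul_diagonal_mul_apply_nonpos [PartialOrder R] [IsOrderedRing R]
    {e : Fin m → R} (he : ∀ k : Fin m, (k : ℕ) ≠ 0 → 0 ≤ e k) {i j : Fin m} (hij : i ≠ j) :
    ((firstDiff m)ᵀ * diagonal e * firstDiff m : Matrix (Fin m) (Fin m) R) i j ≤ 0 := by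
  rw [mul_apply]
  simp only [mul_diagonal, transpose_apply]
  refine Finset.sum_nonpos fun k _ => ?_
  simp only [firstDiff, of_apply, Fin.ext_iff] at hij ⊢
  split_ifs <;> first | omega | (simp <;> exact he k (by omega))

theorem firstDiff_mulVec_pos [PartialOrder R] [IsOrderedAddMonoid R] {a : Fin (m + 1) → R}
    (ha : StrictMono a) {k : Fin (m + 1)} (hk : k ≠ 0) : 0 < (firstDiff (m + 1) *ᵥ a) k := by
  obtain ⟨j, rfl⟩ := Fin.exists_succ_eq.mpr hk
  rw [firstDiff_mulVec_succ, sub_pos]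
  exact ha Fin.castSucc_lt_succ

end Ring

theorem lowerOnes_mul_diagonal_mul_transpose_mul_eq_one {K : Type*} [Field K] {m : ℕ}
    {d : Fin m → K} (hd : ∀ k, d k ≠ 0) :
    lowerOnes m * diagonal d * (lowerOnes m)ᵀ *
      ((firstDiff m)ᵀ * diagonal d⁻¹ * firstDiff m) = 1 := by
  have hKL : firstDiff m * lowerOnes m = (1 : Matrix (Fin m) (Fin m) K) :=
    mul_eq_one_comm.mp lowerOnes_mul_firstDiff
  have hdd : diagonal d * diagonal d⁻¹ = 1 := by
    rw [diagonal_mul_diagonal, ← diagonal_one]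
    exact congrArg diagonal (funext fun k => mul_inv_cancel₀ (hd k))
  calc _ = lowerOnes m * (diagonal d * (firstDiff m * lowerOnes m)ᵀ * diagonal d⁻¹) * firstDiff m := by
          simp only [transpose_mul, Matrix.mul_assoc]
    _ = 1 := by
          rw [hKL, transpose_one, Matrix.mul_one, hdd, Matrix.mul_one, lowerOnes_mul_firstDiff]

end Matrix

theorem stmt19 {n : ℕ} (a : Fin (n + 1) → ℝ) (ha : StrictMono a)
    (hneg : a (Fin.last n) < 0) (A : Matrix (Fin (n + 1)) (Fin (n + 1)) ℝ)
    (hA : ∀ i j, A i j = a (min i j)) :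
    A.det ≠ 0 ∧
    -- `A⁻¹` is tridiagonal
    (∀ i j : Fin (n + 1), (i : ℕ) + 1 < (j : ℕ) ∨ (j : ℕ) + 1 < (i : ℕ) → A⁻¹ i j = 0) ∧
    -- `A⁻¹` is a Z-matrix
    (∀ i j, i ≠ j → A⁻¹ i j ≤ 0) ∧
    -- whose inverse `A` is entrywise negative, so `A⁻¹` is an `N`-matrix
    (∀ i j, A i j < 0) := by
  have hfactor :
      A = lowerOnes (n + 1) * diagonal (firstDiff (n + 1) *ᵥ a) * (lowerOnes (n + 1))ᵀ := by
    rw [lowerOnes_mul_diagonal_firstDiff_mulVec_mul_transpose]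
    exact Matrix.ext hA
  have hA_neg (i j) : A i j < 0 := hA i j ▸ (ha.monotone (Fin.le_last _)).trans_lt hneg
  have hd_ne (k) : (firstDiff (n + 1) *ᵥ a) k ≠ 0 := by
    rcases eq_or_ne k 0 with rfl | hk
    · rw [firstDiff_mulVec_zero]
      exact ((ha.monotone (Fin.zero_le _)).trans_lt hneg).ne
    · exact (firstDiff_mulVec_pos ha hk).ne'
  have hmul := lowerOnes_mul_diagonal_mul_transpose_mul_eq_one hd_ne
  rw [← hfactor] at hmul
  rw [inv_eq_right_inv hmul]
  refine ⟨(isUnit_det_of_right_inverse hmul).ne_zero,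
    fun i j hij => firstDiff_transpose_mul_diagonal_mul_apply_eq_zero _ hij,
    fun i j hij => firstDiff_transpose_mul_diagonal_mul_apply_nonpos (fun k hk => ?_) hij, hA_neg⟩
  exact (inv_pos.2 (firstDiff_mulVec_pos ha (Fin.val_ne_zero_iff.mp hk))).le
end
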